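/- arXiv:1711.00751 — 10 statements merged into one kernel-verified Lean document; each statement's English description precedes it below -/
import Mathlib

section
/- Let n ≥ 2 and let a : {(i,j) : 1 ≤ i < j ≤ n} → ℤ satisfy (a) a_{i,i+1} + a_{i+1,i+2} ≥ a_{i,i+2} for all 1 ≤ i ≤ n−2, and (b) a_{i,j} + a_{i+1,j+1} ≥ a_{i,j+1} + a_{i+1,j} for all 1 ≤ i < j−1 ≤ n−2. Then for all 1 ≤ i < j < k ≤ n one has a_{i,j} + a_{j,k} ≥ a_{i,k}. -/
/-- Monotonicity of increments: from condition (b), the increment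
`a i (m+1) - a i m` is nondecreasing in `i`. -/
lemma mono_incr (n : ℕ) (a : ℕ → ℕ → ℤ)
    (hb : ∀ i j, 1 ≤ i → i + 1 < j → j + 1 ≤ n →
      a i j + a (i+1) (j+1) ≥ a i (j+1) + a (i+1) j) :
    ∀ i m i', 1 ≤ i → i' < m → m + 1 ≤ n → i ≤ i' →
      a i (m+1) - a i m ≤ a i' (m+1) - a i' m := by
  intro i m i' h1 h2 h3 h4
  induction i', h4 using Nat.le_induction with
  | base => exact le_refl _
  | succ k hk ih =>
    have hkm : k < m := by omega
    have h5 := ih (by omega)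
    have h6 := hb k m (by omega) (by omega) h3
    linarith

/-- Proposition (A): the triangle inequalities follow from the elementary
weight-system conditions (a) and (b). -/
theorem stmt0 (n : ℕ) (hn : 2 ≤ n) (a : ℕ → ℕ → ℤ)
    (ha : ∀ i, 1 ≤ i → i + 2 ≤ n → a i (i+1) + a (i+1) (i+2) ≥ a i (i+2))
    (hb : ∀ i j, 1 ≤ i → i + 1 < j → j + 1 ≤ n →
      a i j + a (i+1) (j+1) ≥ a i (j+1) + a (i+1) j) :
    ∀ i j k, 1 ≤ i → i < j → j < k → k ≤ n → a i j + a j k ≥ a i k := by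
  intro i j k h1 hij hjk hkn
  induction k, hjk using Nat.le_induction with
  | base =>
    -- k = j+1 : show a i j + a j (j+1) ≥ a i (j+1)
    obtain ⟨p, rfl⟩ : ∃ p, j = p + 1 := ⟨j - 1, by omega⟩
    have hm := mono_incr n a hb i (p+1) p h1 (by omega) (by omega) (by omega)
    have hp := ha p (by omega) (by omega)
    linarith
  | succ k hk ih =>
    have hm := mono_incr n a hb i k j h1 (by omega) (by omega) (by omega)
    have h5 := ih (by omega)
    linarith
end

section
/- Let n ≥ 2 and let a : {(i,j) : 1 ≤ i < j ≤ n} → ℤ satisfy (a) a_{i,i+1} + a_{i+1,i+2} ≥ a_{i,i+2} for all 1 ≤ i ≤ n−2, and (b) a_{i,j} + a_{i+1,j+1} ≥ a_{i,j+1} + a_{i+1,j} for all 1 ≤ i < j−1 ≤ n−2. Then for all 1 ≤ i < k < j < l ≤ n one has a_{i,j} + a_{k,l} ≥ a_{i,l} + a_{k,j}. -/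
/-- Proposition (B): the "crossing" inequalities follow from the elementary
weight-system conditions (a) and (b). -/
theorem stmt1 (n : ℕ) (hn : 2 ≤ n) (a : ℕ → ℕ → ℤ)
    (ha : ∀ i, 1 ≤ i → i + 2 ≤ n → a i (i+1) + a (i+1) (i+2) ≥ a i (i+2))
    (hb : ∀ i j, 1 ≤ i → i + 1 < j → j + 1 ≤ n →
      a i j + a (i+1) (j+1) ≥ a i (j+1) + a (i+1) j) :
    ∀ i k j l, 1 ≤ i → i < k → k < j → j < l → l ≤ n →
      a i j + a k l ≥ a i l + a k j := by
  -- Lemma 1: one-row sum of (b)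
  have L1 : ∀ i j, 1 ≤ i → i + 1 < j → ∀ l, j ≤ l → l ≤ n →
      a i j + a (i+1) l ≥ a i l + a (i+1) j := by
    intro i j hi hij l hjl hln
    induction l, hjl using Nat.le_induction with
    | base => linarith
    | succ l hl ih =>
      have ih' := ih (by omega)
      have h := hb i l hi (by omega) (by omega)
      linarith
  intro i k j l hi hik hkj hjl hln
  induction k, hik using Nat.le_induction with
  | base => exact L1 i j hi (by omega) l (by omega) hln
  | succ k hk ih =>
    have ih' := ih (by omega)
    have h := L1 k j (by omega) (by omega) l (by omega) hln
    linarith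
end

section
/- Let 1 ≤ k ≤ n−1. An array T = (T_{i,j})_{1≤i<j≤n} with entries in ℤ_{≥0} belongs to Π_{ω_k} (i.e., T_{i,j} ≥ 0 and S(T,d) ≤ M(ω_k,d) for every Dyck path d) if and only if: (i) all T_{i,j} ∈ {0,1}; (ii) T_{i,j} = 1 implies i ≤ k and j ≥ k+1; (iii) the set of pairs (i,j) with T_{i,j} = 1 is an antichain with respect to the componentwise order (i,j) ≤ (i',j') ⇔ i ≤ i' and j ≤ j'. -/
open Finset Pointwise

/-- A Dyck path in the FFLV sense: a sequence of pairs `(i,j)` with `1 ≤ i < j ≤ n`,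
starting and ending on the top row (`j = i + 1`), each step moving to the
upper-right or bottom-right neighbour. -/
structure DyckPath (n : ℕ) where
  toList : List (ℕ × ℕ)
  nonempty : toList ≠ []
  bounds : ∀ p ∈ toList, 1 ≤ p.1 ∧ p.1 < p.2 ∧ p.2 ≤ n
  first_eq : (toList.head nonempty).2 = (toList.head nonempty).1 + 1
  last_eq : (toList.getLast nonempty).2 = (toList.getLast nonempty).1 + 1
  step : toList.Chain' (fun p q => q = (p.1 + 1, p.2) ∨ q = (p.1, p.2 + 1))

/-- `S(x,d)`: the sum of the entries of `x` along the Dyck path `d`. -/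
def DyckPath.S {n : ℕ} {α : Type*} [AddCommMonoid α] (d : DyckPath n) (x : ℕ → ℕ → α) : α :=
  (d.toList.map fun p => x p.1 p.2).sum

/-- `M(λ,d) = a_{i_1} + … + a_{i_N}` for the weight `λ = Σ a_i ω_i`. -/
def DyckPath.M {n : ℕ} (d : DyckPath n) (a : ℕ → ℕ) : ℕ :=
  ∑ i ∈ Finset.Icc (d.toList.head d.nonempty).1 (d.toList.getLast d.nonempty).1, a i

/-
A Dyck path is a chain for the componentwise order, so it meets the antichain support of `T` at
most once; that point `(i, j)` has `i ≤ k < j`, which forces the path to start at or before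
column `k` and to end at or after it, so `S(T, d) ≤ 1 = M(ω_k, d)`. Conversely, for
`i ≤ i' < j ≤ j'` the staircase path through `(i, j)` and `(i', j')` starts at `(i, i + 1)` and
ends at `(j' - 1, j')`; testing the inequality on it gives the three conditions.
-/

namespace DyckPath

variable {n : ℕ}

section OfFun

variable (f : ℕ → ℕ × ℕ) (N : ℕ)
  (bounds : ∀ t ≤ N, 1 ≤ (f t).1 ∧ (f t).1 < (f t).2 ∧ (f t).2 ≤ n)
  (first_eq : (f 0).2 = (f 0).1 + 1) (last_eq : (f N).2 = (f N).1 + 1)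
  (step : ∀ t < N, f (t + 1) = ((f t).1 + 1, (f t).2) ∨ f (t + 1) = ((f t).1, (f t).2 + 1))

def ofFun : DyckPath n where
  toList := (List.range (N + 1)).map f
  nonempty := by simp
  bounds := by
    simp only [List.mem_map, List.mem_range]
    rintro _ ⟨t, ht, rfl⟩
    exact bounds t (by omega)
  first_eq := by simpa [List.head_map, List.head_range] using first_eq
  last_eq := by simpa [List.getLast_map, List.getLast_range] using last_eq
  step := (List.isChain_map f).2 <| (List.isChain_range_succ _ N).2 step

theorem mem_ofFun {t : ℕ} (ht : t ≤ N) :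
    f t ∈ (ofFun f N bounds first_eq last_eq step).toList :=
  List.mem_map_of_mem (List.mem_range.2 (by omega))

theorem head_ofFun :
    (ofFun f N bounds first_eq last_eq step).toList.head (ofFun ..).nonempty = f 0 := by
  simp [ofFun, List.head_map, List.head_range]

theorem getLast_ofFun :
    (ofFun f N bounds first_eq last_eq step).toList.getLast (ofFun ..).nonempty = f N := by
  simp [ofFun, List.getLast_map, List.getLast_range]

end OfFun

/-- Starting at `(i, i + 1)`, raise `j` up to `(i, j)`, then `i` up to `(i', j)`, then `j` up to
`(i', j')`, then `i` up to `(j' - 1, j')`; the `t`-th point has coordinate sum `2 * i + 1 + t`. -/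
def staircase (i i' j j' t : ℕ) : ℕ × ℕ :=
  if t + i + 1 ≤ j then (i, i + 1 + t)
  else if t + 2 * i + 1 ≤ i' + j then (t + 2 * i + 1 - j, j)
  else if t + 2 * i + 1 ≤ i' + j' then (i', t + 2 * i + 1 - i')
  else (t + 2 * i + 1 - j', j')

theorem exists_mem_mem {i i' j j' : ℕ} (hi : 1 ≤ i) (hii' : i ≤ i') (hi'j : i' < j)
    (hjj' : j ≤ j') (hj' : j' ≤ n) :
    ∃ d : DyckPath n, (i, j) ∈ d.toList ∧ (i', j') ∈ d.toList ∧
      (d.toList.head d.nonempty).1 = i ∧ (d.toList.getLast d.nonempty).1 = j' - 1 := by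
  have hbounds : ∀ t ≤ 2 * (j' - i - 1), 1 ≤ (staircase i i' j j' t).1 ∧
      (staircase i i' j j' t).1 < (staircase i i' j j' t).2 ∧
      (staircase i i' j j' t).2 ≤ n := by
    intro t ht; unfold staircase; split_ifs <;> dsimp only <;> omega
  have hstep : ∀ t < 2 * (j' - i - 1),
      staircase i i' j j' (t + 1) = ((staircase i i' j j' t).1 + 1, (staircase i i' j j' t).2) ∨
      staircase i i' j j' (t + 1) = ((staircase i i' j j' t).1, (staircase i i' j j' t).2 + 1) := by
    intro t ht
    unfold staircase
    split_ifs <;> simp only [Prod.ext_iff, true_and, and_true] <;> omega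
  have hfirst : staircase i i' j j' 0 = (i, i + 1) := by
    unfold staircase; split_ifs <;> ext <;> dsimp only <;> omega
  have hlast : staircase i i' j j' (2 * (j' - i - 1)) = (j' - 1, j') := by
    unfold staircase; split_ifs <;> ext <;> dsimp only <;> omega
  have hpoint : staircase i i' j j' (j - i - 1) = (i, j) := by
    unfold staircase; split_ifs <;> ext <;> dsimp only <;> omega
  have hpoint' : staircase i i' j j' (i' + j' - 2 * i - 1) = (i', j') := by
    unfold staircase; split_ifs <;> ext <;> dsimp only <;> omega
  refine ⟨ofFun (staircase i i' j j') (2 * (j' - i - 1)) hbounds (by simp [hfirst])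
    (by simp [hlast]; omega) hstep, ?_, ?_, ?_, ?_⟩
  · exact hpoint ▸ mem_ofFun _ _ _ _ _ _ (by omega)
  · exact hpoint' ▸ mem_ofFun _ _ _ _ _ _ (by omega)
  · simp [head_ofFun, hfirst]
  · simp [getLast_ofFun, hlast]

variable (d : DyckPath n)

theorem pairwise_lt : d.toList.Pairwise (· < ·) :=
  List.isChain_iff_pairwise.1 <| d.step.imp fun _ _ h => by
    rcases h with rfl | rfl <;> simp [Prod.lt_iff]

theorem le_or_le_of_mem {p q : ℕ × ℕ} (hp : p ∈ d.toList) (hq : q ∈ d.toList) :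
    p ≤ q ∨ q ≤ p := by
  have : Std.Symm fun p q : ℕ × ℕ => p ≤ q ∨ q ≤ p := ⟨fun _ _ => Or.symm⟩
  exact List.Pairwise.forall_of_forall (R := fun p q : ℕ × ℕ => p ≤ q ∨ q ≤ p)
    (fun _ _ => Or.inl le_rfl) (d.pairwise_lt.imp fun h => Or.inl h.le) hp hq

theorem head_le {p : ℕ × ℕ} (hp : p ∈ d.toList) : d.toList.head d.nonempty ≤ p :=
  (d.pairwise_lt.imp le_of_lt).rel_head hp

theorem le_getLast {p : ℕ × ℕ} (hp : p ∈ d.toList) : p ≤ d.toList.getLast d.nonempty :=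
  (d.pairwise_lt.imp le_of_lt).rel_getLast hp

section Sum

variable {α : Type*} [AddCommMonoid α] (x : ℕ → ℕ → α)

theorem S_eq_sum_toFinset : d.S x = ∑ p ∈ d.toList.toFinset, x p.1 p.2 :=
  (List.sum_toFinset _ d.pairwise_lt.nodup).symm

theorem S_eq_of_mem {p : ℕ × ℕ} (hp : p ∈ d.toList)
    (h : ∀ q ∈ d.toList, q ≠ p → x q.1 q.2 = 0) : d.S x = x p.1 p.2 := by
  rw [S_eq_sum_toFinset]
  exact Finset.sum_eq_single_of_mem p (List.mem_toFinset.2 hp)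
    fun q hq => h q (List.mem_toFinset.1 hq)

theorem S_eq_zero (h : ∀ q ∈ d.toList, x q.1 q.2 = 0) : d.S x = 0 :=
  List.sum_eq_zero fun _ hy => by
    obtain ⟨q, hq, rfl⟩ := List.mem_map.1 hy
    exact h q hq

variable [PartialOrder α] [CanonicallyOrderedAdd α]

theorem le_S {p : ℕ × ℕ} (hp : p ∈ d.toList) : x p.1 p.2 ≤ d.S x := by
  rw [S_eq_sum_toFinset]
  exact Finset.single_le_sum_of_canonicallyOrdered (f := fun p : ℕ × ℕ => x p.1 p.2)
    (List.mem_toFinset.2 hp)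

theorem add_le_S {p q : ℕ × ℕ} (hp : p ∈ d.toList) (hq : q ∈ d.toList) (hpq : p ≠ q) :
    x p.1 p.2 + x q.1 q.2 ≤ d.S x := by
  rw [S_eq_sum_toFinset, ← Finset.sum_pair (f := fun p : ℕ × ℕ => x p.1 p.2) hpq]
  exact Finset.sum_le_sum_of_subset (by simp [Finset.insert_subset_iff, hp, hq])

end Sum

/-- The coefficients `a_i = δ_{ik}` of the fundamental weight `ω_k`. -/
def fundamentalWeight (k i : ℕ) : ℕ := if i = k then 1 else 0

theorem M_fundamentalWeight (k : ℕ) : d.M (fundamentalWeight k) =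
    if (d.toList.head d.nonempty).1 ≤ k ∧ k ≤ (d.toList.getLast d.nonempty).1 then 1
    else 0 := by
  simp [M, fundamentalWeight, Finset.sum_ite_eq']

theorem M_fundamentalWeight_le_one (k : ℕ) : d.M (fundamentalWeight k) ≤ 1 := by
  rw [M_fundamentalWeight]; split_ifs <;> omega

section Necessity

variable {k : ℕ} {T : ℕ → ℕ → ℕ}
  (hT : ∀ d : DyckPath n, d.S T ≤ d.M (fundamentalWeight k))
include hT

theorem le_one_of_forall_S_le_M {i j : ℕ} (hi : 1 ≤ i) (hij : i < j) (hj : j ≤ n) :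
    T i j ≤ 1 := by
  obtain ⟨d, hd, -⟩ := exists_mem_mem hi le_rfl hij le_rfl hj
  exact ((d.le_S T hd).trans (hT d)).trans (d.M_fundamentalWeight_le_one k)

theorem mem_support_of_forall_S_le_M {i j : ℕ} (hi : 1 ≤ i) (hij : i < j) (hj : j ≤ n)
    (h1 : T i j = 1) : i ≤ k ∧ k + 1 ≤ j := by
  obtain ⟨d, hd, -, hhead, hlast⟩ := exists_mem_mem hi le_rfl hij le_rfl hj
  have := (d.le_S T hd).trans (hT d)
  rw [M_fundamentalWeight, hhead, hlast, h1] at this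
  split_ifs at this <;> omega

theorem eq_of_forall_S_le_M {i j i' j' : ℕ} (hi : 1 ≤ i) (hij : i < j) (hj : j ≤ n)
    (hi' : 1 ≤ i') (hij' : i' < j') (hj' : j' ≤ n) (h1 : T i j = 1) (h1' : T i' j' = 1)
    (hii' : i ≤ i') (hjj' : j ≤ j') : i = i' ∧ j = j' := by
  by_contra hne
  have hi'j : i' < j := by
    have := mem_support_of_forall_S_le_M hT hi hij hj h1
    have := mem_support_of_forall_S_le_M hT hi' hij' hj' h1'
    omega
  obtain ⟨d, hd, hd', -⟩ := exists_mem_mem hi hii' hi'j hjj' hj'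
  have := ((d.add_le_S T hd hd' (by simpa using hne)).trans (hT d)).trans
    (d.M_fundamentalWeight_le_one k)
  dsimp only at this
  omega

end Necessity

theorem S_le_M_fundamentalWeight {k : ℕ} {T : ℕ → ℕ → ℕ}
    (hle : ∀ i j, 1 ≤ i → i < j → j ≤ n → T i j ≤ 1)
    (hsupp : ∀ i j, 1 ≤ i → i < j → j ≤ n → T i j = 1 → i ≤ k ∧ k + 1 ≤ j)
    (hanti : ∀ i j i' j', 1 ≤ i → i < j → j ≤ n → 1 ≤ i' → i' < j' → j' ≤ n →
      T i j = 1 → T i' j' = 1 → i ≤ i' → j ≤ j' → i = i' ∧ j = j') :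
    d.S T ≤ d.M (fundamentalWeight k) := by
  by_cases hone : ∃ p ∈ d.toList, T p.1 p.2 = 1
  · obtain ⟨p, hp, hTp⟩ := hone
    obtain ⟨hp1, hp12, hp2⟩ := d.bounds p hp
    obtain ⟨hpk, hkp⟩ := hsupp _ _ hp1 hp12 hp2 hTp
    have hS : d.S T = 1 := by
      refine (d.S_eq_of_mem T hp fun q hq hqp => ?_).trans hTp
      obtain ⟨hq1, hq12, hq2⟩ := d.bounds q hq
      have hq_le := hle _ _ hq1 hq12 hq2
      by_contra hTq
      have hTq : T q.1 q.2 = 1 := by omega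
      have hqp' : q.1 = p.1 ∧ q.2 = p.2 := by
        rcases d.le_or_le_of_mem hq hp with ⟨h₁, h₂⟩ | ⟨h₁, h₂⟩
        · exact hanti _ _ _ _ hq1 hq12 hq2 hp1 hp12 hp2 hTq hTp h₁ h₂
        · obtain ⟨e₁, e₂⟩ := hanti _ _ _ _ hp1 hp12 hp2 hq1 hq12 hq2 hTp hTq h₁ h₂
          exact ⟨e₁.symm, e₂.symm⟩
      exact hqp (Prod.ext hqp'.1 hqp'.2)
    have hhead := (d.head_le hp).1
    have hlast := (d.le_getLast hp).2
    have := d.last_eq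
    rw [hS, M_fundamentalWeight, if_pos (by omega)]
  · simp only [not_exists, not_and] at hone
    rw [d.S_eq_zero T fun q hq => ?_]
    · exact Nat.zero_le _
    obtain ⟨hq1, hq12, hq2⟩ := d.bounds q hq
    have := hle _ _ hq1 hq12 hq2
    have := hone q hq
    omega

end DyckPath

open DyckPath in
theorem stmt5_general (n k : ℕ) (T : ℕ → ℕ → ℕ) :
    (∀ d : DyckPath n, d.S T ≤ d.M (fun i => if i = k then 1 else 0)) ↔
    ((∀ i j, 1 ≤ i → i < j → j ≤ n → T i j ≤ 1) ∧
     (∀ i j, 1 ≤ i → i < j → j ≤ n → T i j = 1 → i ≤ k ∧ k + 1 ≤ j) ∧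
     (∀ i j i' j', 1 ≤ i → i < j → j ≤ n → 1 ≤ i' → i' < j' → j' ≤ n →
       T i j = 1 → T i' j' = 1 → i ≤ i' → j ≤ j' → i = i' ∧ j = j')) :=
  ⟨fun h => ⟨fun _ _ => le_one_of_forall_S_le_M h, fun _ _ => mem_support_of_forall_S_le_M h,
      fun _ _ _ _ => eq_of_forall_S_le_M h⟩,
    fun ⟨hle, hsupp, hanti⟩ d => d.S_le_M_fundamentalWeight hle hsupp hanti⟩

/-- Characterization of `Π_{ω_k}`: 0/1 arrays supported on `i ≤ k < j` whose support
is an antichain in the componentwise order. -/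
theorem stmt5 (n k : ℕ) (hn : 2 ≤ n) (hk1 : 1 ≤ k) (hk : k ≤ n - 1) (T : ℕ → ℕ → ℕ) :
    (∀ d : DyckPath n, d.S T ≤ d.M (fun i => if i = k then 1 else 0)) ↔
    ((∀ i j, 1 ≤ i → i < j → j ≤ n → T i j ≤ 1) ∧
     (∀ i j, 1 ≤ i → i < j → j ≤ n → T i j = 1 → i ≤ k ∧ k + 1 ≤ j) ∧
     (∀ i j i' j', 1 ≤ i → i < j → j ≤ n → 1 ≤ i' → i' < j' → j' ≤ n →
       T i j = 1 → T i' j' = 1 → i ≤ i' → j ≤ j' → i = i' ∧ j = j')) :=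
  stmt5_general n k T
end

section
/- Let A = (a_{i,j}) be a weight system (satisfying conditions (a) and (b)). Fix 1 ≤ i_1 < … < i_k ≤ n, and let p_1 < … < p_l be the elements of {1,…,k} \ {i_1,…,i_k} and q_1 > … > q_l the elements of {i_1,…,i_k} \ {1,…,k}. Then the minimum of Σ_m a_{x_m,y_m} over all sequences of pairs (x_1,y_1),…,(x_N,y_N) (with x_m < y_m) such that the corresponding product of root vectors f_{x_1,y_1}⋯f_{x_N,y_N} maps e_{1,…,k} to ±e_{i_1,…,i_k} in Λ^k ℂ^n equals a_{p_1,q_1} + … + a_{p_l,q_l}. -/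
/-- The action of a product of root vectors `f_{x_1,y_1} ⋯ f_{x_N,y_N}` on the basis
of `Λ^k ℂ^n`, encoded on index sets: the rightmost factor acts first, `f_{x,y}`
replaces `x` by `y` in the set (and kills the vector if `x` is absent or `y` present).
`applySeq L S = some I` expresses that the product maps `e_S` to `± e_I`. -/
def applySeq : List (ℕ × ℕ) → Finset ℕ → Option (Finset ℕ)
  | [], S => some S
  | p :: rest, S => (applySeq rest S).bind fun S' =>
      if p.1 ∈ S' ∧ p.2 ∉ S' then some (insert p.2 (S'.erase p.1)) else none

/-- The canonical antichain matching: `p_1 < … < p_l` the elements of `{1,…,k} \ I`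
paired with `q_1 > … > q_l` the elements of `I \ {1,…,k}`. -/
def canonPairs (k : ℕ) (I : Finset ℕ) : List (ℕ × ℕ) :=
  ((Finset.Icc 1 k \ I).sort (· ≤ ·)).zip (((I \ Finset.Icc 1 k).sort (· ≤ ·)).reverse)

/-!
Conditions (a) and (b) make `a` a Monge array on `{1, …, n}`,
`a i j' + a i' j ≤ a i j + a i' j'` for `i ≤ i' < j ≤ j'`, satisfying the triangle inequality
`a x z ≤ a x y + a y z` for `x < y < z`.

Call a multiset of pairs a matching of `S` if its first coordinates are the elements of
`{1, …, k} \ S` and its second coordinates those of `S \ {1, …, k}`. Along any admissible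
sequence of root vectors we keep a matching of the current index set whose cost is at most the
weight spent so far: `f_{x,y}` either adds the pair `(x, y)`, or, by the triangle inequality,
reroutes through `x` or `y` the one pair that contained `y` or `x`, at extra cost at most
`a x y`. Uncrossing pairs with the Monge inequality shows that no matching is cheaper than the
antichain `p_m ↔ q_m`, and that antichain is realised by the product of its own root vectors.
-/

open Finset

def MongeOn (n : ℕ) (a : ℕ → ℕ → ℤ) : Prop :=
  ∀ ⦃i i' j j' : ℕ⦄, 1 ≤ i → i ≤ i' → i' < j → j ≤ j' → j' ≤ n →
    a i j' + a i' j ≤ a i j + a i' j'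

def TriangleOn (n : ℕ) (a : ℕ → ℕ → ℤ) : Prop :=
  ∀ ⦃x y z : ℕ⦄, 1 ≤ x → x < y → y < z → z ≤ n → a x z ≤ a x y + a y z

section Weights

variable {n : ℕ} {a : ℕ → ℕ → ℤ}

lemma mongeOn_of_adjacent (hb : ∀ i j, 1 ≤ i → i + 1 < j → j + 1 ≤ n →
      a i j + a (i+1) (j+1) ≥ a i (j+1) + a (i+1) j) : MongeOn n a := by
  have hrow : ∀ i j j', 1 ≤ i → i + 1 < j → j ≤ j' → j' ≤ n →
      a i j' + a (i+1) j ≤ a i j + a (i+1) j' := by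
    intro i j j' hi hij hjj'
    induction j', hjj' using Nat.le_induction with
    | base => intro _; exact le_rfl
    | succ m hm ih => intro hm'; linarith [ih (by omega), hb i m hi (by omega) hm']
  intro i i' j j' hi hii'
  induction i', hii' using Nat.le_induction with
  | base => intros; rw [add_comm]
  | succ m hm ih =>
    intro hmj hjj' hj'
    linarith [ih (by omega) hjj' hj', hrow m j j' (by omega) hmj hjj' hj']

lemma MongeOn.triangleOn (hM : MongeOn n a)
    (ha : ∀ i, 1 ≤ i → i + 2 ≤ n → a i (i+1) + a (i+1) (i+2) ≥ a i (i+2)) : TriangleOn n a := by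
  intro x y z hx hxy hyz hz
  obtain ⟨m, rfl⟩ : ∃ m, y = m + 1 := ⟨y - 1, by omega⟩
  -- Monge on rows `x, m` and on rows `m, m + 1` reduce the claim to condition (a) at `m`
  have h₁ := hM hx (show x ≤ m by omega) (Nat.lt_succ_self m) hyz.le hz
  have h₂ := hM (i := m) (j := m + 2) (by omega) (Nat.le_succ m) (by omega) hyz hz
  linarith [ha m (by omega) (by omega)]

end Weights

def cost (a : ℕ → ℕ → ℤ) (E : Multiset (ℕ × ℕ)) : ℤ := (E.map fun p => a p.1 p.2).sum

@[simp] lemma cost_zero (a : ℕ → ℕ → ℤ) : cost a 0 = 0 := rfl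

@[simp] lemma cost_cons (a : ℕ → ℕ → ℤ) (p : ℕ × ℕ) (E : Multiset (ℕ × ℕ)) :
    cost a (p ::ₘ E) = a p.1 p.2 + cost a E := by
  simp [cost]

@[simp] lemma cost_coe (a : ℕ → ℕ → ℤ) (L : List (ℕ × ℕ)) :
    cost a L = (L.map fun p => a p.1 p.2).sum := by
  simp [cost]

section Uncrossing

variable {n : ℕ} {a : ℕ → ℕ → ℤ}

lemma MongeOn.exists_map_eq_cost_add_le (hM : MongeOn n a) {E : Multiset (ℕ × ℕ)} {p q : ℕ}
    {P Q : Multiset ℕ} (hfst : E.map Prod.fst = p ::ₘ P) (hsnd : E.map Prod.snd = q ::ₘ Q)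
    (hp : ∀ u ∈ P, p ≤ u) (hq : ∀ v ∈ Q, v ≤ q)
    (hrange : ∀ u ∈ p ::ₘ P, ∀ v ∈ q ::ₘ Q, 1 ≤ u ∧ u < v ∧ v ≤ n) :
    ∃ E₀ : Multiset (ℕ × ℕ), E₀.map Prod.fst = P ∧ E₀.map Prod.snd = Q ∧
      a p q + cost a E₀ ≤ cost a E := by
  obtain ⟨q', hpq'⟩ : ∃ q', (p, q') ∈ E := by
    obtain ⟨⟨_, q'⟩, h, rfl⟩ := Multiset.mem_map.1 (hfst ▸ Multiset.mem_cons_self p P)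
    exact ⟨q', h⟩
  obtain ⟨E₁, rfl⟩ := Multiset.exists_cons_of_mem hpq'
  simp only [Multiset.map_cons, Multiset.cons_inj_right] at hfst hsnd
  by_cases hq' : q' = q
  · subst hq'
    exact ⟨E₁, hfst, (Multiset.cons_inj_right _).1 hsnd, by simp⟩
  have hqE : q ∈ E₁.map Prod.snd := by
    have hq := Multiset.mem_cons_self q Q
    rw [← hsnd, Multiset.mem_cons] at hq
    exact hq.resolve_left (Ne.symm hq')
  obtain ⟨p', hp'q⟩ : ∃ p', (p', q) ∈ E₁ := by
    obtain ⟨⟨p', _⟩, h, rfl⟩ := Multiset.mem_map.1 hqE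
    exact ⟨p', h⟩
  obtain ⟨E₂, rfl⟩ := Multiset.exists_cons_of_mem hp'q
  simp only [Multiset.map_cons] at hfst hsnd
  rw [Multiset.cons_swap, Multiset.cons_inj_right] at hsnd
  refine ⟨(p', q') ::ₘ E₂, by simpa using hfst, by simpa using hsnd, ?_⟩
  have hp' : p' ∈ P := hfst ▸ Multiset.mem_cons_self _ _
  have hq'Q : q' ∈ Q := hsnd ▸ Multiset.mem_cons_self _ _
  have hpq := hrange p (Multiset.mem_cons_self _ _) q (Multiset.mem_cons_self _ _)
  have hp'q' := hrange p' (Multiset.mem_cons_of_mem hp') q' (Multiset.mem_cons_of_mem hq'Q)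
  have := hM hpq.1 (hp p' hp') hp'q'.2.1 (hq q' hq'Q) hpq.2.2
  simp only [cost_cons]
  linarith

lemma MongeOn.cost_zip_le (hM : MongeOn n a) :
    ∀ (P Q : List ℕ) (E : Multiset (ℕ × ℕ)), P.Pairwise (· ≤ ·) → Q.Pairwise (· ≥ ·) →
      (∀ u ∈ P, ∀ v ∈ Q, 1 ≤ u ∧ u < v ∧ v ≤ n) →
      E.map Prod.fst = P → E.map Prod.snd = Q → cost a (P.zip Q) ≤ cost a E
  | [], _, E, _, _, _, hfst, _ => by
    simp [Multiset.map_eq_zero.1 hfst]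
  | _ :: _, [], E, _, _, _, hfst, hsnd => by
    rw [Multiset.map_eq_zero.1 hsnd, Multiset.map_zero] at hfst
    exact absurd hfst.symm (by simp)
  | p :: P, q :: Q, E, hP, hQ, hrange, hfst, hsnd => by
    rw [List.pairwise_cons] at hP hQ
    rw [← Multiset.cons_coe] at hfst hsnd
    obtain ⟨E₀, hfst₀, hsnd₀, hcost⟩ := hM.exists_map_eq_cost_add_le hfst hsnd hP.1 hQ.1
      (by simpa using hrange)
    have := hM.cost_zip_le P Q E₀ hP.2 hQ.2
      (fun u hu v hv => hrange u (List.mem_cons_of_mem _ hu) v (List.mem_cons_of_mem _ hv))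
      hfst₀ hsnd₀
    simp only [List.zip_cons_cons, ← Multiset.cons_coe, cost_cons]
    linarith

end Uncrossing

lemma lt_and_le_of_mem_sdiff_Icc {n k q : ℕ} {S : Finset ℕ} (hS : S ⊆ Icc 1 n)
    (hq : q ∈ S \ Icc 1 k) : k < q ∧ q ≤ n := by
  obtain ⟨hqS, hqk⟩ := mem_sdiff.1 hq
  have := mem_Icc.1 (hS hqS)
  rw [mem_Icc] at hqk
  omega

def IsMatching (k : ℕ) (S : Finset ℕ) (E : Multiset (ℕ × ℕ)) : Prop :=
  E.map Prod.fst = (Icc 1 k \ S).val ∧ E.map Prod.snd = (S \ Icc 1 k).val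

section Matching

variable {n k : ℕ} {a : ℕ → ℕ → ℤ} {S : Finset ℕ} {E : Multiset (ℕ × ℕ)}

lemma isMatching_Icc : IsMatching k (Icc 1 k) 0 := by
  simp [IsMatching]

lemma IsMatching.mem_sdiff_of_mem (hE : IsMatching k S E) {p q : ℕ} (h : (p, q) ∈ E) :
    p ∈ Icc 1 k \ S ∧ q ∈ S \ Icc 1 k := by
  rw [← mem_val, ← mem_val, ← hE.1, ← hE.2]
  exact ⟨Multiset.mem_map_of_mem _ h, Multiset.mem_map_of_mem _ h⟩

lemma IsMatching.exists_mem_of_fst (hE : IsMatching k S E) {p : ℕ} (hp : p ∈ Icc 1 k \ S) :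
    ∃ q, (p, q) ∈ E := by
  obtain ⟨⟨_, q⟩, h, rfl⟩ := Multiset.mem_map.1 (by rw [hE.1]; exact hp)
  exact ⟨q, h⟩

lemma IsMatching.exists_mem_of_snd (hE : IsMatching k S E) {q : ℕ} (hq : q ∈ S \ Icc 1 k) :
    ∃ p, (p, q) ∈ E := by
  obtain ⟨⟨p, _⟩, h, rfl⟩ := Multiset.mem_map.1 (by rw [hE.2]; exact hq)
  exact ⟨p, h⟩

lemma IsMatching.exists_step_of_le (hT : TriangleOn n a) (hS : S ⊆ Icc 1 n)
    (hE : IsMatching k S E) {x y : ℕ} (hx : x ∈ S) (hy : y ∉ S) (hxy : x < y) (hyk : y ≤ k) :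
    ∃ E', IsMatching k (insert y (S.erase x)) E' ∧ cost a E' ≤ cost a E + a x y := by
  have h1x : 1 ≤ x := (mem_Icc.1 (hS hx)).1
  obtain ⟨q, hyq⟩ := hE.exists_mem_of_fst (mem_sdiff.2 ⟨mem_Icc.2 ⟨by omega, hyk⟩, hy⟩)
  have hq := lt_and_le_of_mem_sdiff_Icc hS (hE.mem_sdiff_of_mem hyq).2
  obtain ⟨hfst, hsnd⟩ := hE
  obtain ⟨E₀, rfl⟩ := Multiset.exists_cons_of_mem hyq
  have hA : Icc 1 k \ insert y (S.erase x) = insert x ((Icc 1 k \ S).erase y) := by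
    ext z; simp only [mem_sdiff, mem_insert, mem_erase, mem_Icc]; grind
  have hB : insert y (S.erase x) \ Icc 1 k = S \ Icc 1 k := by
    ext z; simp only [mem_sdiff, mem_insert, mem_erase, mem_Icc]; grind
  refine ⟨(x, q) ::ₘ E₀, ⟨?_, ?_⟩, ?_⟩
  · rw [hA, insert_val_of_notMem (by simp [hx]), erase_val, ← hfst]
    simp
  · rw [hB, ← hsnd]
    simp
  · have := hT h1x hxy (by omega) hq.2
    simp only [cost_cons]
    linarith

lemma IsMatching.exists_step_of_le_of_lt (hE : IsMatching k S E) {x y : ℕ} (hx : x ∈ S)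
    (hy : y ∉ S) (h1x : 1 ≤ x) (hxk : x ≤ k) (hky : k < y) :
    ∃ E', IsMatching k (insert y (S.erase x)) E' ∧ cost a E' ≤ cost a E + a x y := by
  have hA : Icc 1 k \ insert y (S.erase x) = insert x (Icc 1 k \ S) := by
    ext z; simp only [mem_sdiff, mem_insert, mem_erase, mem_Icc]; grind
  have hB : insert y (S.erase x) \ Icc 1 k = insert y (S \ Icc 1 k) := by
    ext z; simp only [mem_sdiff, mem_insert, mem_erase, mem_Icc]; grind
  refine ⟨(x, y) ::ₘ E, ⟨?_, ?_⟩, by simp only [cost_cons]; linarith⟩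
  · rw [hA, insert_val_of_notMem (by simp [hx]), ← hE.1, Multiset.map_cons]
  · rw [hB, insert_val_of_notMem (by simp [hy]), ← hE.2, Multiset.map_cons]

lemma IsMatching.exists_step_of_lt (hT : TriangleOn n a) (hE : IsMatching k S E) {x y : ℕ}
    (hx : x ∈ S) (hy : y ∉ S) (hxy : x < y) (hyn : y ≤ n) (hkx : k < x) :
    ∃ E', IsMatching k (insert y (S.erase x)) E' ∧ cost a E' ≤ cost a E + a x y := by
  obtain ⟨p, hpx⟩ := hE.exists_mem_of_snd (mem_sdiff.2 ⟨hx, by simp; omega⟩)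
  have hp := mem_Icc.1 (mem_sdiff.1 (hE.mem_sdiff_of_mem hpx).1).1
  obtain ⟨hfst, hsnd⟩ := hE
  obtain ⟨E₀, rfl⟩ := Multiset.exists_cons_of_mem hpx
  have hA : Icc 1 k \ insert y (S.erase x) = Icc 1 k \ S := by
    ext z; simp only [mem_sdiff, mem_insert, mem_erase, mem_Icc]; grind
  have hB : insert y (S.erase x) \ Icc 1 k = insert y ((S \ Icc 1 k).erase x) := by
    ext z; simp only [mem_sdiff, mem_insert, mem_erase, mem_Icc]; grind
  refine ⟨(p, y) ::ₘ E₀, ⟨?_, ?_⟩, ?_⟩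
  · rw [hA, ← hfst]
    simp
  · rw [hB, insert_val_of_notMem (by simp [hy]), erase_val, ← hsnd]
    simp
  · have := hT hp.1 (by omega) hxy hyn
    simp only [cost_cons]
    linarith

lemma IsMatching.exists_step (hT : TriangleOn n a) (hS : S ⊆ Icc 1 n) (hE : IsMatching k S E)
    {x y : ℕ} (hx : x ∈ S) (hy : y ∉ S) (hxy : x < y) (hyn : y ≤ n) :
    ∃ E', IsMatching k (insert y (S.erase x)) E' ∧ cost a E' ≤ cost a E + a x y := by
  rcases le_or_gt y k with hyk | hky
  · exact hE.exists_step_of_le hT hS hx hy hxy hyk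
  rcases le_or_gt x k with hxk | hkx
  · exact hE.exists_step_of_le_of_lt hx hy (mem_Icc.1 (hS hx)).1 hxk hky
  · exact hE.exists_step_of_lt hT hx hy hxy hyn hkx

lemma IsMatching.cost_canonPairs_le (hM : MongeOn n a) (hS : S ⊆ Icc 1 n)
    (hE : IsMatching k S E) : cost a (canonPairs k S) ≤ cost a E := by
  refine hM.cost_zip_le _ _ E (pairwise_sort _ _) (List.pairwise_reverse.2 (pairwise_sort _ _))
    (fun u hu v hv => ?_) (by rw [hE.1, sort_eq]) (by rw [hE.2, Multiset.coe_reverse, sort_eq])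
  have hu' := mem_Icc.1 (mem_sdiff.1 ((mem_sort _).1 hu)).1
  have hv' := lt_and_le_of_mem_sdiff_Icc hS ((mem_sort _).1 (List.mem_reverse.1 hv))
  omega

end Matching

lemma applySeq_cons_eq_some {p : ℕ × ℕ} {L : List (ℕ × ℕ)} {S T : Finset ℕ} :
    applySeq (p :: L) S = some T ↔
      ∃ R, applySeq L S = some R ∧ p.1 ∈ R ∧ p.2 ∉ R ∧ insert p.2 (R.erase p.1) = T := by
  simp only [applySeq, Option.bind_eq_some_iff]
  grind

lemma exists_isMatching_of_applySeq {n k : ℕ} {a : ℕ → ℕ → ℤ} (hT : TriangleOn n a)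
    (hkn : k ≤ n) :
    ∀ {L : List (ℕ × ℕ)} {S : Finset ℕ}, (∀ p ∈ L, p.1 < p.2 ∧ p.2 ≤ n) →
      applySeq L (Icc 1 k) = some S →
      S ⊆ Icc 1 n ∧ ∃ E, IsMatching k S E ∧ cost a E ≤ cost a L
  | [], S, _, h => by
    obtain rfl : Icc 1 k = S := Option.some.inj h
    exact ⟨Icc_subset_Icc_right hkn, 0, isMatching_Icc, by simp⟩
  | p :: L, S, hL, h => by
    obtain ⟨R, hR, hpR, hpR', rfl⟩ := applySeq_cons_eq_some.1 h
    obtain ⟨hRn, E, hE, hcost⟩ :=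
      exists_isMatching_of_applySeq hT hkn (fun q hq => hL q (List.mem_cons_of_mem _ hq)) hR
    have hp := hL p List.mem_cons_self
    obtain ⟨E', hE', hcost'⟩ := hE.exists_step hT hRn hpR hpR' hp.1 hp.2
    refine ⟨insert_subset (mem_Icc.2 ⟨by omega, hp.2⟩) ((erase_subset _ _).trans hRn), E', hE',
      ?_⟩
    simp only [cost_coe, List.map_cons, List.sum_cons] at hcost ⊢
    linarith

lemma applySeq_eq_some_of_nodup {T : Finset ℕ} :
    ∀ {L : List (ℕ × ℕ)}, (L.map Prod.fst).Nodup → (L.map Prod.snd).Nodup →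
      (∀ p ∈ L, p.1 ∈ T ∧ p.2 ∉ T) →
      applySeq L T = some (T \ (L.map Prod.fst).toFinset ∪ (L.map Prod.snd).toFinset)
  | [], _, _, _ => by simp [applySeq]
  | (u, v) :: L, hfst, hsnd, hL => by
    simp only [List.map_cons, List.nodup_cons] at hfst hsnd
    have ih := applySeq_eq_some_of_nodup hfst.2 hsnd.2 fun p hp => hL p (by simp [hp])
    have huv := hL (u, v) (by simp)
    have hvT : ∀ p ∈ L, p.2 ∉ T := fun p hp => (hL p (by simp [hp])).2
    refine applySeq_cons_eq_some.2 ⟨_, ih, ?_, ?_, ?_⟩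
    · simp_all
    · simp_all
    · ext z
      simp only [List.map_cons, List.toFinset_cons, mem_insert, mem_erase, mem_union, mem_sdiff,
        List.mem_toFinset, List.mem_map]
      grind

lemma mem_sdiff_of_mem_canonPairs {k : ℕ} {I : Finset ℕ} {p : ℕ × ℕ} (hp : p ∈ canonPairs k I) :
    p.1 ∈ Icc 1 k \ I ∧ p.2 ∈ I \ Icc 1 k := by
  simpa using List.of_mem_zip hp

lemma applySeq_canonPairs {k : ℕ} {I : Finset ℕ} (hcard : I.card = k) :
    applySeq (canonPairs k I) (Icc 1 k) = some I := by
  have hlen : (Icc 1 k \ I).card = (I \ Icc 1 k).card :=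
    card_sdiff_comm (by simp [hcard])
  have hfst : (canonPairs k I).map Prod.fst = (Icc 1 k \ I).sort (· ≤ ·) :=
    List.map_fst_zip (by simp [hlen])
  have hsnd : (canonPairs k I).map Prod.snd = ((I \ Icc 1 k).sort (· ≤ ·)).reverse :=
    List.map_snd_zip (by simp [hlen])
  rw [applySeq_eq_some_of_nodup (by rw [hfst]; exact sort_nodup _ (· ≤ ·))
    (by rw [hsnd]; exact List.nodup_reverse.2 (sort_nodup _ _)), hfst, hsnd]
  · rw [List.toFinset_reverse, sort_toFinset, sort_toFinset]
    congr 1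
    ext z
    simp only [mem_union, mem_sdiff]
    tauto
  · intro p hp
    have := mem_sdiff_of_mem_canonPairs hp
    exact ⟨(mem_sdiff.1 this.1).1, (mem_sdiff.1 this.2).2⟩

theorem stmt7_general (n k : ℕ) (a : ℕ → ℕ → ℤ)
    (ha : ∀ i, 1 ≤ i → i + 2 ≤ n → a i (i+1) + a (i+1) (i+2) ≥ a i (i+2))
    (hb : ∀ i j, 1 ≤ i → i + 1 < j → j + 1 ≤ n →
      a i j + a (i+1) (j+1) ≥ a i (j+1) + a (i+1) j)
    (hkn : k ≤ n)
    (I : Finset ℕ) (hI : I ⊆ Finset.Icc 1 n) (hcard : I.card = k) :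
    IsLeast {v : ℤ | ∃ L : List (ℕ × ℕ),
        (∀ p ∈ L, 1 ≤ p.1 ∧ p.1 < p.2 ∧ p.2 ≤ n) ∧
        applySeq L (Finset.Icc 1 k) = some I ∧
        v = (L.map fun p => a p.1 p.2).sum}
      ((canonPairs k I).map fun pq => a pq.1 pq.2).sum := by
  have hM := mongeOn_of_adjacent hb
  refine ⟨⟨canonPairs k I, fun p hp => ?_, applySeq_canonPairs hcard, rfl⟩, ?_⟩
  · obtain ⟨hp₁, hp₂⟩ := mem_sdiff_of_mem_canonPairs hp
    have := mem_Icc.1 (mem_sdiff.1 hp₁).1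
    have := lt_and_le_of_mem_sdiff_Icc hI hp₂
    omega
  · rintro v ⟨L, hL, hLI, rfl⟩
    obtain ⟨-, E, hE, hcost⟩ := exists_isMatching_of_applySeq (hM.triangleOn ha) hkn
      (fun p hp => (hL p hp).2) hLI
    simpa using (hE.cost_canonPairs_le hM hI).trans hcost

/-- Proposition (antichainmin): `s^A_{i_1,…,i_k} = a_{p_1,q_1} + … + a_{p_l,q_l}`:
the minimum of `Σ a_{x_m,y_m}` over all sequences of root vectors carrying
`e_{1,…,k}` to `± e_{i_1,…,i_k}` equals the sum over the antichain matching. -/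
theorem stmt7 (n k : ℕ) (hn : 2 ≤ n) (a : ℕ → ℕ → ℤ)
    (ha : ∀ i, 1 ≤ i → i + 2 ≤ n → a i (i+1) + a (i+1) (i+2) ≥ a i (i+2))
    (hb : ∀ i j, 1 ≤ i → i + 1 < j → j + 1 ≤ n →
      a i j + a (i+1) (j+1) ≥ a i (j+1) + a (i+1) j)
    (hk : 1 ≤ k) (hkn : k ≤ n)
    (I : Finset ℕ) (hI : I ⊆ Finset.Icc 1 n) (hcard : I.card = k) :
    IsLeast {v : ℤ | ∃ L : List (ℕ × ℕ),
        (∀ p ∈ L, 1 ≤ p.1 ∧ p.1 < p.2 ∧ p.2 ≤ n) ∧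
        applySeq L (Finset.Icc 1 k) = some I ∧
        v = (L.map fun p => a p.1 p.2).sum}
      ((canonPairs k I).map fun pq => a pq.1 pq.2).sum :=
  stmt7_general n k a ha hb hkn I hI hcard
end

section
/- The set 𝒦 ⊆ ℝ^{n(n−1)/2} of weight systems, defined by a_{i,i+1}+a_{i+1,i+2} ≥ a_{i,i+2} (1 ≤ i ≤ n−2) and a_{i,j}+a_{i+1,j+1} ≥ a_{i,j+1}+a_{i+1,j} (1 ≤ i < j−1 ≤ n−2), is the product (direct sum) of the linear subspace L of dimension n−1 given by a_{i,j} = a_{i,i+1}+…+a_{j−1,j} for all i < j, and a simplicial cone of dimension (n−1)(n−2)/2 given by a_{i,i+1} = 0 for all i together with the inequalities (a) and (b). In particular 𝒦 is a full-dimensional polyhedral cone in ℝ^{n(n−1)/2} and its lineality space is L. -/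
open Finset Pointwise

/-- Index type for the coordinates `a_{i,j}`, `1 ≤ i < j ≤ n` (realized 0-indexed). -/
abbrev WPair (n : ℕ) := {p : Fin n × Fin n // p.1 < p.2}

/-- The entry `a_{i,j}` of `x` for `1 ≤ i < j ≤ n` (and `0` for invalid indices). -/
def ent (n : ℕ) (x : WPair n → ℝ) (i j : ℕ) : ℝ :=
  if h : 1 ≤ i ∧ i < j ∧ j ≤ n then
    x ⟨(⟨i - 1, by omega⟩, ⟨j - 1, by omega⟩), by
      simp only [Fin.mk_lt_mk]; omega⟩
  else 0

/-- The cone `𝒦` of weight systems: conditions (a) and (b). -/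
def Kcone (n : ℕ) : Set (WPair n → ℝ) :=
  {x | (∀ i, 1 ≤ i → i + 2 ≤ n →
          ent n x i (i+2) ≤ ent n x i (i+1) + ent n x (i+1) (i+2)) ∧
       (∀ i j, 1 ≤ i → i + 1 < j → j + 1 ≤ n →
          ent n x i (j+1) + ent n x (i+1) j ≤ ent n x i j + ent n x (i+1) (j+1))}

/-- The linear subspace `L`: `a_{i,j} = a_{i,i+1} + … + a_{j-1,j}` for all `i < j`. -/
def Lset (n : ℕ) : Set (WPair n → ℝ) :=
  {x | ∀ i j, 1 ≤ i → i < j → j ≤ n →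
    ent n x i j = ∑ t ∈ Finset.Ico i j, ent n x t (t+1)}

/-- The cone cut out inside `𝒦` by `a_{i,i+1} = 0` for all `i`. -/
def C0set (n : ℕ) : Set (WPair n → ℝ) :=
  {x | x ∈ Kcone n ∧ ∀ i, 1 ≤ i → i + 1 ≤ n → ent n x i (i+1) = 0}

/-!
The entries `a_{t,t+1}` (`1 ≤ t ≤ n-1`) together with the second differences
`D_{p,q}(a) = a_{p,q} + a_{p+1,q+1} - a_{p,q+1} - a_{p+1,q}` (`1 ≤ p < q ≤ n-1`, reading
`a_{p+1,p+1}` as `0`) form a coordinate system: a vector whose coordinates all vanish is zero, by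
induction on `j - i`. Conditions (a) and (b) say exactly `D ≥ 0`, and `L` is exactly `D = 0`.
The cut vectors `e_t` (`a_{i,j} = 1` iff `i ≤ t < j`) and the corner vectors `g_{p,q}`
(`a_{i,j} = -1` iff `i ≤ p` and `q < j`) form the dual basis, so that
`a = ∑ a_{t,t+1} e_t + ∑ D_{p,q}(a) g_{p,q}` splits `𝒦` into `L` plus the simplicial cone
spanned by the `g_{p,q}`; the point `∑ g_{p,q}`, where every `D_{p,q}` equals `1`, is interior.
-/

section Biorthogonal

variable {ι R M : Type*} [DecidableEq ι] [Ring R] [AddCommGroup M] [Module R M]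
  {s : Finset ι} {v : ι → M} {f : ι → M →ₗ[R] R}

theorem Set.InjOn.of_biorthogonal [Nontrivial R]
    (hvf : ∀ i ∈ s, ∀ j ∈ s, f i (v j) = if i = j then 1 else 0) : Set.InjOn v s := by
  intro i hi j hj hij
  by_contra hne
  have h := hvf i hi j hj
  rw [← hij, hvf i hi i hi, if_pos rfl, if_neg hne] at h
  exact one_ne_zero h

theorem LinearIndepOn.of_biorthogonal
    (hvf : ∀ i ∈ s, ∀ j ∈ s, f i (v j) = if i = j then 1 else 0) : LinearIndepOn R v s := by
  refine linearIndepOn_finset_iff.2 fun c hc i hi => ?_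
  have h := congrArg (f i) hc
  simp_rw [map_sum, map_smul, map_zero, smul_eq_mul] at h
  rw [Finset.sum_congr rfl fun j hj => by rw [hvf i hi j hj]] at h
  simp only [mul_ite, mul_one, mul_zero] at h
  rwa [Finset.sum_ite_eq, if_pos hi] at h

theorem card_image_of_biorthogonal [Nontrivial R] [DecidableEq M]
    (hvf : ∀ i ∈ s, ∀ j ∈ s, f i (v j) = if i = j then 1 else 0) : #(s.image v) = #s :=
  card_image_of_injOn (.of_biorthogonal hvf)

theorem linearIndependent_image_of_biorthogonal [DecidableEq M]
    (hvf : ∀ i ∈ s, ∀ j ∈ s, f i (v j) = if i = j then 1 else 0) :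
    LinearIndependent R ((↑) : s.image v → M) := by
  have h := (LinearIndepOn.of_biorthogonal hvf).id_image
  rwa [← Finset.coe_image] at h

end Biorthogonal

theorem exists_nonneg_sum_image_iff {ι R M : Type*} [Nonempty ι] [Semiring R] [LE R]
    [AddCommMonoid M] [Module R M] [DecidableEq M] {s : Finset ι} {v : ι → M}
    (hv : Set.InjOn v s) (x : M) :
    (∃ c : M → R, (∀ g ∈ s.image v, 0 ≤ c g) ∧ x = ∑ g ∈ s.image v, c g • g) ↔
      ∃ c : ι → R, (∀ i ∈ s, 0 ≤ c i) ∧ x = ∑ i ∈ s, c i • v i := by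
  rw [exists_congr fun c => by rw [Finset.forall_mem_image, Finset.sum_image hv]]
  refine ⟨fun ⟨c, hc⟩ => ⟨c ∘ v, hc⟩, fun ⟨c, hc, hx⟩ => ⟨c ∘ Function.invFunOn v s, ?_⟩⟩
  have hinv : ∀ i ∈ s, c (Function.invFunOn v s (v i)) = c i := fun i hi => by
    rw [hv.leftInvOn_invFunOn hi]
  exact ⟨fun i hi => by rw [Function.comp_apply, hinv i hi]; exact hc i hi,
    hx.trans (Finset.sum_congr rfl fun i hi => by rw [Function.comp_apply, hinv i hi])⟩

section WeightSystems

variable {n : ℕ}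

theorem ent_of_not_valid (x : WPair n → ℝ) {i j : ℕ} (h : ¬(1 ≤ i ∧ i < j ∧ j ≤ n)) :
    ent n x i j = 0 :=
  dif_neg h

def entLinear (n i j : ℕ) : (WPair n → ℝ) →ₗ[ℝ] ℝ where
  toFun x := ent n x i j
  map_add' x y := by unfold ent; split_ifs <;> simp
  map_smul' c x := by unfold ent; split_ifs <;> simp

theorem ent_sub (x y : WPair n → ℝ) (i j : ℕ) : ent n (x - y) i j = ent n x i j - ent n y i j :=
  map_sub (entLinear n i j) x y

theorem ent_sum_smul {ι : Type*} (s : Finset ι) (c : ι → ℝ) (v : ι → WPair n → ℝ) (i j : ℕ) :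
    ent n (∑ a ∈ s, c a • v a) i j = ∑ a ∈ s, c a * ent n (v a) i j :=
  (map_sum (entLinear n i j) _ s).trans (sum_congr rfl fun _ _ => map_smul _ _ _)

def ofEntries (n : ℕ) (a : ℕ → ℕ → ℝ) : WPair n → ℝ := fun q => a (q.1.1 + 1) (q.1.2 + 1)

theorem ent_ofEntries (a : ℕ → ℕ → ℝ) (i j : ℕ) :
    ent n (ofEntries n a) i j = if 1 ≤ i ∧ i < j ∧ j ≤ n then a i j else 0 := by
  unfold ent ofEntries
  split_ifs with h
  · congr 1 <;> dsimp only <;> omega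
  · rfl

theorem ofEntries_ent (x : WPair n → ℝ) : ofEntries n (ent n x) = x := by
  funext ⟨⟨a, b⟩, hab⟩
  simp [ofEntries, ent, show a < b from hab]

def innerPairs (n : ℕ) : Finset (ℕ × ℕ) := {w ∈ Ico 1 n ×ˢ Ico 1 n | w.1 < w.2}

theorem mem_innerPairs {w : ℕ × ℕ} : w ∈ innerPairs n ↔ 1 ≤ w.1 ∧ w.1 < w.2 ∧ w.2 + 1 ≤ n := by
  simp only [innerPairs, mem_filter, mem_product, mem_Ico]
  omega

theorem card_innerPairs : #(innerPairs n) = (n - 1) * (n - 2) / 2 := by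
  rw [innerPairs, card_product_filter_lt, Nat.card_Ico, Nat.choose_two_right,
    show n - 1 - 1 = n - 2 by omega]

def secondDiff (n : ℕ) (w : ℕ × ℕ) : (WPair n → ℝ) →ₗ[ℝ] ℝ :=
  entLinear n w.1 w.2 + entLinear n (w.1 + 1) (w.2 + 1) - entLinear n w.1 (w.2 + 1)
    - entLinear n (w.1 + 1) w.2

theorem secondDiff_apply (w : ℕ × ℕ) (x : WPair n → ℝ) :
    secondDiff n w x = ent n x w.1 w.2 + ent n x (w.1 + 1) (w.2 + 1) - ent n x w.1 (w.2 + 1)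
      - ent n x (w.1 + 1) w.2 :=
  rfl

theorem mem_Kcone_iff {x : WPair n → ℝ} :
    x ∈ Kcone n ↔ ∀ w ∈ innerPairs n, 0 ≤ secondDiff n w x := by
  have hdiag : ∀ i, ent n x (i + 1) (i + 1) = 0 := fun i => ent_of_not_valid x (by omega)
  simp only [Kcone, Set.mem_ofPred_eq, mem_innerPairs, secondDiff_apply, Prod.forall]
  constructor
  · rintro ⟨ha, hb⟩ p q ⟨h1, h2, h3⟩
    rcases (show q = p + 1 ∨ p + 1 < q by omega) with rfl | h
    · linarith [ha p h1 h3, hdiag p]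
    · linarith [hb p q h1 h h3]
  · intro h
    refine ⟨fun i h1 h2 => ?_, fun i j h1 h2 h3 => ?_⟩
    · linarith [h i (i + 1) ⟨h1, by omega, h2⟩, hdiag i]
    · linarith [h i j ⟨h1, by omega, h3⟩]

theorem eq_zero_of_secondDiff_eq_zero {y : WPair n → ℝ}
    (hdiag : ∀ t, 1 ≤ t → t + 1 ≤ n → ent n y t (t + 1) = 0)
    (hD : ∀ w ∈ innerPairs n, secondDiff n w y = 0) : y = 0 := by
  have key : ∀ d i j, j ≤ i + d → ent n y i j = 0 := by
    intro d
    induction d with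
    | zero => exact fun i j h => ent_of_not_valid y (by omega)
    | succ d ih =>
      intro i j hj
      by_cases hv : 1 ≤ i ∧ i < j ∧ j ≤ n
      swap
      · exact ent_of_not_valid y hv
      by_cases hd : j ≤ i + d
      · exact ih i j hd
      obtain rfl | hd0 := Nat.eq_zero_or_pos d
      · obtain rfl : j = i + 1 := by omega
        exact hdiag i hv.1 hv.2.2
      · have h := hD (i, j - 1) (mem_innerPairs.2 ⟨hv.1, by omega, by omega⟩)
        rw [secondDiff_apply, Nat.sub_add_cancel (by omega : 1 ≤ j), ih i (j - 1) (by omega),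
          ih (i + 1) j (by omega), ih (i + 1) (j - 1) (by omega)] at h
        linarith
  rw [← ofEntries_ent y]
  funext q
  exact key _ _ _ (Nat.le_add_left _ _)

theorem ent_eq_sum_of_mem_Lset {x : WPair n → ℝ} (hx : x ∈ Lset n) {i j : ℕ} (hi : 1 ≤ i)
    (hij : i ≤ j) (hj : j ≤ n) : ent n x i j = ∑ t ∈ Ico i j, ent n x t (t + 1) := by
  rcases hij.eq_or_lt with rfl | hij
  · rw [Ico_self, sum_empty]
    exact ent_of_not_valid x (by omega)
  · exact hx i j hi hij hj

theorem secondDiff_eq_zero_of_mem_Lset {x : WPair n → ℝ} (hx : x ∈ Lset n) {w : ℕ × ℕ}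
    (hw : w ∈ innerPairs n) : secondDiff n w x = 0 := by
  obtain ⟨h1, h2, h3⟩ := mem_innerPairs.1 hw
  rw [secondDiff_apply, ent_eq_sum_of_mem_Lset hx h1 h2.le (by omega),
    ent_eq_sum_of_mem_Lset hx (by omega) (by omega) h3,
    ent_eq_sum_of_mem_Lset hx h1 (by omega) h3, ent_eq_sum_of_mem_Lset hx (by omega) h2 (by omega),
    sum_Ico_succ_top (by omega), sum_Ico_succ_top (by omega)]
  ring

def cutVec (n t : ℕ) : WPair n → ℝ := ofEntries n fun i j => if i ≤ t ∧ t < j then 1 else 0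

def cornerVec (n : ℕ) (w : ℕ × ℕ) : WPair n → ℝ :=
  ofEntries n fun i j => if i ≤ w.1 ∧ w.2 < j then -1 else 0

theorem ent_succ_cutVec {s : ℕ} (hs : s ∈ Ico 1 n) (t : ℕ) :
    ent n (cutVec n t) s (s + 1) = if s = t then 1 else 0 := by
  rw [mem_Ico] at hs
  rw [cutVec, ent_ofEntries]
  split_ifs <;> first | rfl | omega

theorem secondDiff_cutVec {w : ℕ × ℕ} (hw : w ∈ innerPairs n) (t : ℕ) :
    secondDiff n w (cutVec n t) = 0 := by
  rw [mem_innerPairs] at hw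
  simp only [secondDiff_apply, cutVec, ent_ofEntries]
  split_ifs <;> first | (exfalso; omega) | norm_num

theorem ent_sum_smul_cutVec (c : ℕ → ℝ) {i j : ℕ} (hij : 1 ≤ i ∧ i < j ∧ j ≤ n) :
    ent n (∑ t ∈ Ico 1 n, c t • cutVec n t) i j = ∑ t ∈ Ico i j, c t := by
  rw [ent_sum_smul, ← sum_subset (Ico_subset_Ico hij.1 hij.2.2)]
  · refine sum_congr rfl fun t ht => ?_
    rw [mem_Ico] at ht
    rw [cutVec, ent_ofEntries, if_pos hij, if_pos ht, mul_one]
  · intro t _ ht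
    rw [mem_Ico] at ht
    rw [cutVec, ent_ofEntries, if_pos hij, if_neg ht, mul_zero]

theorem ent_succ_sum_smul_cutVec (c : ℕ → ℝ) {t : ℕ} (h1 : 1 ≤ t) (h2 : t + 1 ≤ n) :
    ent n (∑ s ∈ Ico 1 n, c s • cutVec n s) t (t + 1) = c t := by
  rw [ent_sum_smul_cutVec c ⟨h1, by omega, h2⟩, Nat.Ico_succ_singleton, sum_singleton]

theorem sum_smul_cutVec_mem_Lset (c : ℕ → ℝ) : ∑ t ∈ Ico 1 n, c t • cutVec n t ∈ Lset n := by
  intro i j h1 h2 h3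
  rw [ent_sum_smul_cutVec c ⟨h1, h2, h3⟩]
  exact sum_congr rfl fun t ht => by
    rw [mem_Ico] at ht
    rw [ent_succ_sum_smul_cutVec c (by omega) (by omega)]

theorem secondDiff_cornerVec {w w' : ℕ × ℕ} (hw : w ∈ innerPairs n) (hw' : w' ∈ innerPairs n) :
    secondDiff n w (cornerVec n w') = if w = w' then 1 else 0 := by
  rw [mem_innerPairs] at hw hw'
  obtain ⟨p, q⟩ := w
  obtain ⟨p', q'⟩ := w'
  simp only [secondDiff_apply, cornerVec, ent_ofEntries, Prod.mk.injEq] at hw hw' ⊢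
  split_ifs <;> first | (exfalso; omega) | norm_num

theorem secondDiff_sum_smul_cornerVec (c : ℕ × ℕ → ℝ) {w : ℕ × ℕ} (hw : w ∈ innerPairs n) :
    secondDiff n w (∑ w' ∈ innerPairs n, c w' • cornerVec n w') = c w := by
  simp_rw [map_sum, map_smul, smul_eq_mul]
  rw [sum_congr rfl fun w' hw' => by rw [secondDiff_cornerVec hw hw']]
  simp only [mul_ite, mul_one, mul_zero]
  rw [sum_ite_eq, if_pos hw]

theorem ent_succ_sum_smul_cornerVec (c : ℕ × ℕ → ℝ) (t : ℕ) :
    ent n (∑ w ∈ innerPairs n, c w • cornerVec n w) t (t + 1) = 0 := by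
  rw [ent_sum_smul]
  refine sum_eq_zero fun w hw => ?_
  rw [mem_innerPairs] at hw
  rw [cornerVec, ent_ofEntries, if_neg (by omega : ¬(t ≤ w.1 ∧ w.2 < t + 1)), ite_self, mul_zero]

theorem eq_sum_cutVec_add_sum_cornerVec (x : WPair n → ℝ) :
    x = ∑ t ∈ Ico 1 n, ent n x t (t + 1) • cutVec n t +
      ∑ w ∈ innerPairs n, secondDiff n w x • cornerVec n w := by
  rw [← sub_eq_zero, ← sub_sub]
  refine eq_zero_of_secondDiff_eq_zero (fun t h1 h2 => ?_) (fun w hw => ?_)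
  · rw [ent_sub, ent_sub, ent_succ_sum_smul_cutVec _ h1 h2, ent_succ_sum_smul_cornerVec]
    ring
  · rw [map_sub, map_sub, secondDiff_eq_zero_of_mem_Lset (sum_smul_cutVec_mem_Lset _) hw,
      secondDiff_sum_smul_cornerVec _ hw]
    ring

theorem eq_sum_cutVec_of_secondDiff_eq_zero {x : WPair n → ℝ}
    (hD : ∀ w ∈ innerPairs n, secondDiff n w x = 0) :
    x = ∑ t ∈ Ico 1 n, ent n x t (t + 1) • cutVec n t := by
  conv_lhs => rw [eq_sum_cutVec_add_sum_cornerVec x]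
  rw [sum_eq_zero (s := innerPairs n) fun w hw => by rw [hD w hw, zero_smul], add_zero]

theorem mem_Lset_iff {x : WPair n → ℝ} :
    x ∈ Lset n ↔ ∀ w ∈ innerPairs n, secondDiff n w x = 0 := by
  refine ⟨fun hx w hw => secondDiff_eq_zero_of_mem_Lset hx hw, fun hD => ?_⟩
  rw [eq_sum_cutVec_of_secondDiff_eq_zero hD]
  exact sum_smul_cutVec_mem_Lset _

theorem mem_C0set_iff {x : WPair n → ℝ} :
    x ∈ C0set n ↔ ∃ c : ℕ × ℕ → ℝ, (∀ w ∈ innerPairs n, 0 ≤ c w) ∧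
      x = ∑ w ∈ innerPairs n, c w • cornerVec n w := by
  constructor
  · rintro ⟨hK, hdiag⟩
    refine ⟨fun w => secondDiff n w x, fun w hw => mem_Kcone_iff.1 hK w hw, ?_⟩
    conv_lhs => rw [eq_sum_cutVec_add_sum_cornerVec x]
    rw [sum_eq_zero fun t ht => by rw [mem_Ico] at ht; rw [hdiag t ht.1 ht.2, zero_smul],
      zero_add]
  · rintro ⟨c, hc, rfl⟩
    refine ⟨mem_Kcone_iff.2 fun w hw => ?_, fun t _ _ => ent_succ_sum_smul_cornerVec c t⟩
    rw [secondDiff_sum_smul_cornerVec c hw]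
    exact hc w hw

theorem Kcone_eq_Lset_add_C0set : Kcone n = Lset n + C0set n := by
  ext x
  refine ⟨fun hx => ?_, ?_⟩
  · rw [eq_sum_cutVec_add_sum_cornerVec x]
    exact Set.add_mem_add (sum_smul_cutVec_mem_Lset _)
      (mem_C0set_iff.2 ⟨_, fun w hw => mem_Kcone_iff.1 hx w hw, rfl⟩)
  · rintro ⟨l, hl, c, ⟨hc, -⟩, rfl⟩
    refine mem_Kcone_iff.2 fun w hw => ?_
    rw [map_add, secondDiff_eq_zero_of_mem_Lset hl hw, zero_add]
    exact mem_Kcone_iff.1 hc w hw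

theorem Lset_inter_C0set_subset : Lset n ∩ C0set n ⊆ {0} := fun _ ⟨hL, _, hdiag⟩ =>
  eq_zero_of_secondDiff_eq_zero hdiag fun _ hw => secondDiff_eq_zero_of_mem_Lset hL hw

theorem Kcone_lineality_eq_Lset : {x | x ∈ Kcone n ∧ -x ∈ Kcone n} = Lset n := by
  ext x
  simp only [Set.mem_ofPred_eq, mem_Lset_iff, mem_Kcone_iff, map_neg, neg_nonneg,
    ← forall₂_and, le_antisymm_iff, and_comm]

theorem Lset_eq_span :
    Lset n = (Submodule.span ℝ ((Ico 1 n).image (cutVec n) : Set (WPair n → ℝ)) : Set _) := by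
  ext x
  refine ⟨fun hx => ?_, fun hx => mem_Lset_iff.2 fun w hw => ?_⟩
  · rw [eq_sum_cutVec_of_secondDiff_eq_zero (mem_Lset_iff.1 hx)]
    exact Submodule.sum_mem _ fun t ht => Submodule.smul_mem _ _
      (Submodule.subset_span (by simpa using ⟨t, mem_Ico.1 ht, rfl⟩))
  · refine (Submodule.span_le (p := LinearMap.ker (secondDiff n w))).2 ?_ hx
    rw [coe_image]
    rintro _ ⟨t, -, rfl⟩
    exact secondDiff_cutVec hw t

theorem interior_Kcone_nonempty : (interior (Kcone n)).Nonempty := by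
  have hopen : IsOpen {x : WPair n → ℝ | ∀ w ∈ innerPairs n, 0 < secondDiff n w x} := by
    simp only [Set.ofPred_forall]
    exact isOpen_biInter_finset fun w _ =>
      isOpen_lt continuous_const (LinearMap.continuous_of_finiteDimensional _)
  refine ⟨∑ w ∈ innerPairs n, (1 : ℝ) • cornerVec n w, mem_interior.2 ⟨_, ?_, hopen, ?_⟩⟩
  · exact fun x hx => mem_Kcone_iff.2 fun w hw => (hx w hw).le
  · exact fun w hw => by rw [secondDiff_sum_smul_cornerVec _ hw]; exact one_pos

end WeightSystems

theorem stmt9_general (n : ℕ) :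
    Kcone n = Lset n + C0set n ∧
    Lset n ∩ C0set n ⊆ {0} ∧
    {x | x ∈ Kcone n ∧ -x ∈ Kcone n} = Lset n ∧
    (∃ B : Finset (WPair n → ℝ), B.card = n - 1 ∧
      LinearIndependent ℝ ((↑) : B → (WPair n → ℝ)) ∧
      Lset n = (Submodule.span ℝ (B : Set (WPair n → ℝ)) : Set (WPair n → ℝ))) ∧
    (∃ G : Finset (WPair n → ℝ), G.card = (n-1)*(n-2)/2 ∧
      LinearIndependent ℝ ((↑) : G → (WPair n → ℝ)) ∧
      C0set n = {x | ∃ c : (WPair n → ℝ) → ℝ, (∀ g ∈ G, 0 ≤ c g) ∧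
        x = ∑ g ∈ G, c g • g}) ∧
    (interior (Kcone n)).Nonempty := by
  classical
  have hcut : ∀ s ∈ Ico 1 n, ∀ t ∈ Ico 1 n,
      entLinear n s (s + 1) (cutVec n t) = if s = t then 1 else 0 := fun _ hs t _ =>
    ent_succ_cutVec hs t
  have hcorner : ∀ w ∈ innerPairs n, ∀ w' ∈ innerPairs n,
      secondDiff n w (cornerVec n w') = if w = w' then 1 else 0 := fun _ hw _ hw' =>
    secondDiff_cornerVec hw hw'
  refine ⟨Kcone_eq_Lset_add_C0set, Lset_inter_C0set_subset, Kcone_lineality_eq_Lset,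
    ⟨_, by rw [card_image_of_biorthogonal hcut, Nat.card_Ico],
      linearIndependent_image_of_biorthogonal hcut, Lset_eq_span⟩,
    ⟨_, by rw [card_image_of_biorthogonal hcorner, card_innerPairs],
      linearIndependent_image_of_biorthogonal hcorner, ?_⟩, interior_Kcone_nonempty⟩
  ext x
  rw [Set.mem_ofPred_eq, exists_nonneg_sum_image_iff (.of_biorthogonal hcorner), mem_C0set_iff]

/-- `𝒦` is the product of the `(n-1)`-dimensional linear subspace `L` and a simplicial
cone of dimension `(n-1)(n-2)/2`; it is a full-dimensional polyhedral cone with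
lineality space `L`. -/
theorem stmt9 (n : ℕ) (hn : 2 ≤ n) :
    Kcone n = Lset n + C0set n ∧
    Lset n ∩ C0set n ⊆ {0} ∧
    {x | x ∈ Kcone n ∧ -x ∈ Kcone n} = Lset n ∧
    (∃ B : Finset (WPair n → ℝ), B.card = n - 1 ∧
      LinearIndependent ℝ ((↑) : B → (WPair n → ℝ)) ∧
      Lset n = (Submodule.span ℝ (B : Set (WPair n → ℝ)) : Set (WPair n → ℝ))) ∧
    (∃ G : Finset (WPair n → ℝ), G.card = (n-1)*(n-2)/2 ∧
      LinearIndependent ℝ ((↑) : G → (WPair n → ℝ)) ∧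
      C0set n = {x | ∃ c : (WPair n → ℝ) → ℝ, (∀ g ∈ G, 0 ≤ c g) ∧
        x = ∑ g ∈ G, c g • g}) ∧
    (interior (Kcone n)).Nonempty :=
  stmt9_general n
end

section
/- Define h : ℝ^{n(n−1)/2} → ℝ^{2^n−2} by sending A = (a_{i,j}) to the point with coordinates s^A_I for each nonempty proper subset I = {i_1 < … < i_k} of {1,…,n}, where s^A_I = a_{p_1,q_1}+…+a_{p_l,q_l} with p_1 < … < p_l the elements of {1,…,k}\I and q_1 > … > q_l the elements of I\{1,…,k}. Then h is injective, and its image is the linear subspace cut out by: [i] s_{1,…,k} = 0 for 1 ≤ k ≤ n−1; [ii] s_{1,…,i−1,i+1,…,k,j} = s_{1,…,i−1,i+1,…,l,j} for all 1 ≤ i < j ≤ n and i ≤ k < l < j; [iii] s_I = s_{1,…,p_1−1,q_1} + … + s_{1,…,p_l−1,q_l} for every proper I with p_s, q_s as above. -/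
open Finset Pointwise

/-- Index type for Plücker coordinates: nonempty proper subsets of `{1,…,n}`. -/
abbrev SIdx (n : ℕ) :=
  {I : Finset ℕ // I.Nonempty ∧ I ⊆ Finset.Icc 1 n ∧ I ≠ Finset.Icc 1 n}

/-- `s^A_I = a_{p_1,q_1} + … + a_{p_l,q_l}`, where `p_1 < … < p_l` are the elements of
`{1,…,|I|} \ I` and `q_1 > … > q_l` those of `I \ {1,…,|I|}`. -/
noncomputable def sCoord (n : ℕ) (x : WPair n → ℝ) (I : Finset ℕ) : ℝ :=
  ((((Finset.Icc 1 I.card \ I).sort (· ≤ ·)).zip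
      (((I \ Finset.Icc 1 I.card).sort (· ≤ ·)).reverse)).map
    fun pq => ent n x pq.1 pq.2).sum

/-- The linear map `h : ℝ^{n(n-1)/2} → ℝ^{2^n - 2}`, `A ↦ (s^A_I)_I`. -/
noncomputable def hmap (n : ℕ) (x : WPair n → ℝ) : SIdx n → ℝ :=
  fun I => sCoord n x I.val

/-- The coordinate `s_J` of a point `s`, for a subset `J` (0 for invalid `J`). -/
noncomputable def sAt (n : ℕ) (s : SIdx n → ℝ) (J : Finset ℕ) : ℝ :=
  if h : J.Nonempty ∧ J ⊆ Finset.Icc 1 n ∧ J ≠ Finset.Icc 1 n then s ⟨J, h⟩ else 0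

/-- Condition [i]: `s_{1,…,k} = 0` for `1 ≤ k ≤ n-1`. -/
def CondI (n : ℕ) (s : SIdx n → ℝ) : Prop :=
  ∀ k, 1 ≤ k → k ≤ n - 1 → sAt n s (Finset.Icc 1 k) = 0

/-- Condition [ii]: `s_{1,…,i-1,i+1,…,k,j} = s_{1,…,i-1,i+1,…,l,j}` for
`1 ≤ i ≤ k < l < j ≤ n`. -/
def CondII (n : ℕ) (s : SIdx n → ℝ) : Prop :=
  ∀ i j k l, 1 ≤ i → i ≤ k → k < l → l < j → j ≤ n →
    sAt n s (insert j ((Finset.Icc 1 k).erase i))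
      = sAt n s (insert j ((Finset.Icc 1 l).erase i))

/-- Condition [iii]: `s_I = s_{1,…,p_1-1,q_1} + … + s_{1,…,p_l-1,q_l}`. -/
def CondIII (n : ℕ) (s : SIdx n → ℝ) : Prop :=
  ∀ I : SIdx n, s I =
    (((((Finset.Icc 1 I.val.card \ I.val).sort (· ≤ ·)).zip
          (((I.val \ Finset.Icc 1 I.val.card).sort (· ≤ ·)).reverse)).map
        (fun pq => sAt n s (insert pq.2 (Finset.Icc 1 (pq.1 - 1))))).sum : ℝ)

/-- Condition [iv]: `s_{1,…,i-1,i+1} + s_{1,…,i,i+2} ≥ s_{1,…,i-1,i+2}`. -/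
def CondIV (n : ℕ) (s : SIdx n → ℝ) : Prop :=
  ∀ i, 1 ≤ i → i + 2 ≤ n →
    sAt n s (insert (i+2) (Finset.Icc 1 (i-1)))
      ≤ sAt n s (insert (i+1) (Finset.Icc 1 (i-1)))
        + sAt n s (insert (i+2) (Finset.Icc 1 i))

/-- Condition [v]: `s_{1,…,i-1,j} + s_{1,…,i,j+1} ≥ s_{1,…,i-1,j+1} + s_{1,…,i,j}`. -/
def CondV (n : ℕ) (s : SIdx n → ℝ) : Prop :=
  ∀ i j, 1 ≤ i → i + 1 < j → j + 1 ≤ n →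
    sAt n s (insert (j+1) (Finset.Icc 1 (i-1))) + sAt n s (insert j (Finset.Icc 1 i))
      ≤ sAt n s (insert j (Finset.Icc 1 (i-1)))
        + sAt n s (insert (j+1) (Finset.Icc 1 i))

-- key computation
lemma erase_Icc (i : ℕ) (h : 1 ≤ i) : (Finset.Icc 1 i).erase i = Finset.Icc 1 (i-1) := by
  ext a; simp [Finset.mem_Icc]; omega

lemma valid_key (n i j k : ℕ) (h1 : 1 ≤ i) (h2 : i ≤ k) (h3 : k < j) (h4 : j ≤ n) :
    (insert j ((Finset.Icc 1 k).erase i)).Nonempty ∧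
    (insert j ((Finset.Icc 1 k).erase i)) ⊆ Finset.Icc 1 n ∧
    (insert j ((Finset.Icc 1 k).erase i)) ≠ Finset.Icc 1 n := by
  refine ⟨Finset.insert_nonempty _ _, ?_, ?_⟩
  · intro a ha
    simp only [Finset.mem_insert, Finset.mem_erase, Finset.mem_Icc] at ha ⊢
    omega
  · intro heq
    have hi : i ∈ Finset.Icc 1 n := Finset.mem_Icc.mpr ⟨h1, by omega⟩
    rw [← heq] at hi
    simp only [Finset.mem_insert, Finset.mem_erase, Finset.mem_Icc] at hi
    omega

lemma sCoord_key (n : ℕ) (x : WPair n → ℝ) (i j k : ℕ)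
    (h1 : 1 ≤ i) (h2 : i ≤ k) (h3 : k < j) (h4 : j ≤ n) :
    sCoord n x (insert j ((Finset.Icc 1 k).erase i)) = ent n x i j := by
  have hcard : (insert j ((Finset.Icc 1 k).erase i)).card = k := by
    rw [Finset.card_insert_of_notMem (by simp [Finset.mem_Icc]; omega),
      Finset.card_erase_of_mem (Finset.mem_Icc.mpr ⟨h1, h2⟩)]
    simp [Nat.card_Icc]; omega
  have hA : Finset.Icc 1 k \ insert j ((Finset.Icc 1 k).erase i) = {i} := by
    ext a
    simp only [Finset.mem_sdiff, Finset.mem_insert, Finset.mem_erase, Finset.mem_Icc,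
      Finset.mem_singleton]
    omega
  have hB : insert j ((Finset.Icc 1 k).erase i) \ Finset.Icc 1 k = {j} := by
    ext a
    simp only [Finset.mem_sdiff, Finset.mem_insert, Finset.mem_erase, Finset.mem_Icc,
      Finset.mem_singleton]
    omega
  simp [sCoord, hcard, hA, hB, Finset.sort_singleton]

lemma sAt_hmap_key (n : ℕ) (x : WPair n → ℝ) (i j k : ℕ)
    (h1 : 1 ≤ i) (h2 : i ≤ k) (h3 : k < j) (h4 : j ≤ n) :
    sAt n (hmap n x) (insert j ((Finset.Icc 1 k).erase i)) = ent n x i j := by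
  rw [sAt, dif_pos (valid_key n i j k h1 h2 h3 h4)]
  exact sCoord_key n x i j k h1 h2 h3 h4

lemma sAt_hmap_key' (n : ℕ) (x : WPair n → ℝ) (p q : ℕ)
    (h1 : 1 ≤ p) (h2 : p < q) (h3 : q ≤ n) :
    sAt n (hmap n x) (insert q (Finset.Icc 1 (p-1))) = ent n x p q := by
  rw [← erase_Icc p h1]
  exact sAt_hmap_key n x p q p h1 le_rfl h2 h3

noncomputable def gmap (n : ℕ) (s : SIdx n → ℝ) : WPair n → ℝ :=
  fun P => sAt n s (insert ((P.1.2 : ℕ) + 1) (Finset.Icc 1 (P.1.1 : ℕ)))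

lemma gmap_hmap (n : ℕ) (x : WPair n → ℝ) : gmap n (hmap n x) = x := by
  funext P
  obtain ⟨⟨a, b⟩, hab⟩ := P
  have hb : (b : ℕ) < n := b.isLt
  have hab' : (a : ℕ) < (b : ℕ) := hab
  show sAt n (hmap n x) (insert ((b : ℕ) + 1) (Finset.Icc 1 (a : ℕ))) = _
  have : (a : ℕ) = (a : ℕ) + 1 - 1 := rfl
  rw [this, sAt_hmap_key' n x ((a:ℕ)+1) ((b:ℕ)+1) (by omega) (by omega) (by omega)]
  rw [ent, dif_pos ⟨by omega, by omega, by omega⟩]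
  rfl

lemma ent_gmap (n : ℕ) (s : SIdx n → ℝ) (p q : ℕ)
    (h1 : 1 ≤ p) (h2 : p < q) (h3 : q ≤ n) :
    ent n (gmap n s) p q = sAt n s (insert q (Finset.Icc 1 (p-1))) := by
  rw [ent, dif_pos ⟨h1, h2, h3⟩]
  have hq : q - 1 + 1 = q := by omega
  simp [gmap, hq]

lemma mem_zip_pairs (n : ℕ) (I : Finset ℕ) (hI : I ⊆ Finset.Icc 1 n) (p q : ℕ)
    (hpq : (p, q) ∈ (((Finset.Icc 1 I.card \ I).sort (· ≤ ·)).zip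
      (((I \ Finset.Icc 1 I.card).sort (· ≤ ·)).reverse))) :
    1 ≤ p ∧ p < q ∧ q ≤ n := by
  obtain ⟨hp, hq⟩ := List.of_mem_zip hpq
  rw [Finset.mem_sort] at hp
  rw [List.mem_reverse, Finset.mem_sort] at hq
  simp only [Finset.mem_sdiff, Finset.mem_Icc] at hp hq
  have hqn : q ∈ Finset.Icc 1 n := hI hq.1
  rw [Finset.mem_Icc] at hqn
  omega

lemma hmap_gmap (n : ℕ) (s : SIdx n → ℝ)
    (h3 : ∀ I : SIdx n, s I =
      (((((Finset.Icc 1 I.val.card \ I.val).sort (· ≤ ·)).zip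
            (((I.val \ Finset.Icc 1 I.val.card).sort (· ≤ ·)).reverse)).map
          (fun pq => sAt n s (insert pq.2 (Finset.Icc 1 (pq.1 - 1))))).sum : ℝ)) :
    hmap n (gmap n s) = s := by
  funext I
  rw [h3 I]
  show sCoord n (gmap n s) I.val = _
  rw [sCoord]
  congr 1
  apply List.map_congr_left
  rintro ⟨p, q⟩ hpq
  obtain ⟨g1, g2, g3⟩ := mem_zip_pairs n I.val I.prop.2.1 p q hpq
  exact ent_gmap n s p q g1 g2 g3

lemma condI_hmap (n : ℕ) (x : WPair n → ℝ) (k : ℕ) (h1 : 1 ≤ k) (h2 : k ≤ n - 1) :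
    sAt n (hmap n x) (Finset.Icc 1 k) = 0 := by
  have hv : (Finset.Icc 1 k).Nonempty ∧ Finset.Icc 1 k ⊆ Finset.Icc 1 n ∧
      Finset.Icc 1 k ≠ Finset.Icc 1 n := by
    refine ⟨⟨1, Finset.mem_Icc.mpr ⟨le_rfl, h1⟩⟩, Finset.Icc_subset_Icc_right (by omega), ?_⟩
    intro heq
    have : n ∈ Finset.Icc 1 k := heq ▸ Finset.mem_Icc.mpr ⟨by omega, le_rfl⟩
    rw [Finset.mem_Icc] at this; omega
  rw [sAt, dif_pos hv]
  show sCoord n x (Finset.Icc 1 k) = 0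
  have hc : (Finset.Icc 1 k).card = k := by simp [Nat.card_Icc]
  simp [sCoord, hc]

lemma condIII_hmap (n : ℕ) (x : WPair n → ℝ) (I : SIdx n) :
    hmap n x I =
      (((((Finset.Icc 1 I.val.card \ I.val).sort (· ≤ ·)).zip
            (((I.val \ Finset.Icc 1 I.val.card).sort (· ≤ ·)).reverse)).map
          (fun pq => sAt n (hmap n x) (insert pq.2 (Finset.Icc 1 (pq.1 - 1))))).sum : ℝ) := by
  show sCoord n x I.val = _
  rw [sCoord]
  congr 1
  apply List.map_congr_left
  rintro ⟨p, q⟩ hpq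
  obtain ⟨g1, g2, g3⟩ := mem_zip_pairs n I.val I.prop.2.1 p q hpq
  exact (sAt_hmap_key' n x p q g1 g2 g3).symm

/-- `h` is injective and its image is the linear subspace cut out by conditions
[i], [ii], [iii]. -/
theorem stmt10 (n : ℕ) (hn : 2 ≤ n) :
    Function.Injective (hmap n) ∧
    Set.range (hmap n) = {s | CondI n s ∧ CondII n s ∧ CondIII n s} := by
  constructor
  · intro x y h
    have h2 := congrArg (gmap n) h
    rwa [gmap_hmap, gmap_hmap] at h2
  · ext s
    constructor
    · rintro ⟨x, rfl⟩
      refine ⟨fun k h1 h2 => condI_hmap n x k h1 h2, ?_, fun I => condIII_hmap n x I⟩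
      intro i j k l h1 h2 h3 h4 h5
      rw [sAt_hmap_key n x i j k h1 h2 (by omega) h5,
        sAt_hmap_key n x i j l h1 (by omega) h4 h5]
    · rintro ⟨-, -, h3⟩
      exact ⟨gmap n s, hmap_gmap n s h3⟩
end

section
/- The image 𝒞 = h(𝒦) ⊆ ℝ^{2^n−2} of the cone of weight systems under the map h is exactly the set of points s satisfying: [i] s_{1,…,k} = 0 for 1 ≤ k ≤ n−1; [ii] s_{1,…,i−1,i+1,…,k,j} = s_{1,…,i−1,i+1,…,l,j} for all 1 ≤ i < j ≤ n, i ≤ k < l < j; [iii] s_I = s_{1,…,p_1−1,q_1} + … + s_{1,…,p_l−1,q_l} for every proper I; [iv] s_{1,…,i−1,i+1} + s_{1,…,i,i+2} ≥ s_{1,…,i−1,i+2} for 1 ≤ i ≤ n−2; [v] s_{1,…,i−1,j} + s_{1,…,i,j+1} ≥ s_{1,…,i−1,j+1} + s_{1,…,i,j} for 1 ≤ i < j−1 ≤ n−2. -/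
open Finset Pointwise

lemma sCoord_icc (n k : ℕ) (x : WPair n → ℝ) : sCoord n x (Finset.Icc 1 k) = 0 := by
  unfold sCoord
  simp [Nat.card_Icc]

lemma sCoord_single (n : ℕ) (x : WPair n → ℝ) (i k j : ℕ)
    (h1 : 1 ≤ i) (h2 : i ≤ k) (h3 : k < j) :
    sCoord n x (insert j ((Finset.Icc 1 k).erase i)) = ent n x i j := by
  have hjm : j ∉ (Finset.Icc 1 k).erase i := by
    simp [Finset.mem_Icc]; omega
  have hcard : (insert j ((Finset.Icc 1 k).erase i)).card = k := by
    rw [Finset.card_insert_of_notMem hjm,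
      Finset.card_erase_of_mem (by simp [Finset.mem_Icc]; omega), Nat.card_Icc]
    omega
  have hd1 : Finset.Icc 1 k \ insert j ((Finset.Icc 1 k).erase i) = {i} := by
    ext a
    simp only [Finset.mem_sdiff, Finset.mem_insert, Finset.mem_erase,
      Finset.mem_Icc, Finset.mem_singleton]
    constructor
    · rintro ⟨⟨ha1, ha2⟩, h⟩
      by_contra hne
      exact h (Or.inr ⟨hne, ha1, ha2⟩)
    · rintro rfl; refine ⟨⟨h1, h2⟩, ?_⟩; push_neg; exact ⟨by omega, fun h _ => absurd rfl h⟩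
  have hd2 : insert j ((Finset.Icc 1 k).erase i) \ Finset.Icc 1 k = {j} := by
    ext a
    simp only [Finset.mem_sdiff, Finset.mem_insert, Finset.mem_erase,
      Finset.mem_Icc, Finset.mem_singleton]
    constructor
    · rintro ⟨h, hna⟩
      rcases h with rfl | ⟨_, h⟩
      · rfl
      · exact absurd h hna
    · rintro rfl; exact ⟨Or.inl rfl, by omega⟩
  unfold sCoord
  rw [hcard, hd1, hd2, Finset.sort_singleton, Finset.sort_singleton]
  simp
lemma valid_insert (n i k j : ℕ) (h1 : 1 ≤ i) (h2 : i ≤ k) (h3 : k < j) (h4 : j ≤ n) :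
    (insert j ((Finset.Icc 1 k).erase i)).Nonempty ∧
      insert j ((Finset.Icc 1 k).erase i) ⊆ Finset.Icc 1 n ∧
      insert j ((Finset.Icc 1 k).erase i) ≠ Finset.Icc 1 n := by
  refine ⟨⟨j, Finset.mem_insert_self _ _⟩, ?_, ?_⟩
  · intro a ha
    simp only [Finset.mem_insert, Finset.mem_erase, Finset.mem_Icc] at ha ⊢
    omega
  · intro heq
    have hi : i ∈ Finset.Icc 1 n := by simp only [Finset.mem_Icc]; omega
    rw [← heq] at hi
    simp only [Finset.mem_insert, Finset.mem_erase, Finset.mem_Icc] at hi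
    omega

lemma sAt_hmap_erase (n : ℕ) (x : WPair n → ℝ) (i k j : ℕ)
    (h1 : 1 ≤ i) (h2 : i ≤ k) (h3 : k < j) (h4 : j ≤ n) :
    sAt n (hmap n x) (insert j ((Finset.Icc 1 k).erase i)) = ent n x i j := by
  rw [sAt, dif_pos (valid_insert n i k j h1 h2 h3 h4)]
  exact sCoord_single n x i k j h1 h2 h3

lemma insert_icc_pred (i j : ℕ) (h : 1 ≤ i) :
    insert j (Finset.Icc 1 (i-1)) = insert j ((Finset.Icc 1 i).erase i) := by
  congr 1
  ext a
  simp only [Finset.mem_erase, Finset.mem_Icc]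
  omega

lemma sAt_hmap_pair (n : ℕ) (x : WPair n → ℝ) (i j : ℕ)
    (h1 : 1 ≤ i) (h2 : i < j) (h3 : j ≤ n) :
    sAt n (hmap n x) (insert j (Finset.Icc 1 (i-1))) = ent n x i j := by
  rw [insert_icc_pred i j h1]
  exact sAt_hmap_erase n x i i j h1 le_rfl h2 h3

noncomputable def xOf (n : ℕ) (s : SIdx n → ℝ) : WPair n → ℝ :=
  fun p => sAt n s (insert (p.val.2.val + 1) (Finset.Icc 1 p.val.1.val))

lemma ent_xOf (n : ℕ) (s : SIdx n → ℝ) (i j : ℕ)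
    (h1 : 1 ≤ i) (h2 : i < j) (h3 : j ≤ n) :
    ent n (xOf n s) i j = sAt n s (insert j (Finset.Icc 1 (i-1))) := by
  rw [ent, dif_pos ⟨h1, h2, h3⟩]
  show sAt n s (insert (j - 1 + 1) (Finset.Icc 1 (i-1))) = _
  congr 2
  omega
lemma zip_pair_bounds (n : ℕ) (I : Finset ℕ) (hsub : I ⊆ Finset.Icc 1 n)
    {p q : ℕ}
    (hpq : (p, q) ∈ (((Finset.Icc 1 I.card \ I).sort (· ≤ ·)).zip
      (((I \ Finset.Icc 1 I.card).sort (· ≤ ·)).reverse))) :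
    1 ≤ p ∧ p < q ∧ q ≤ n := by
  obtain ⟨hp, hq⟩ := List.of_mem_zip hpq
  rw [Finset.mem_sort] at hp
  rw [List.mem_reverse, Finset.mem_sort] at hq
  simp only [Finset.mem_sdiff, Finset.mem_Icc] at hp hq
  have hqn := hsub hq.1
  simp only [Finset.mem_Icc] at hqn
  omega

/-- The cone `𝒞 = h(𝒦)` is cut out by conditions [i]–[v]. -/
theorem stmt11 (n : ℕ) (hn : 2 ≤ n) :
    hmap n '' Kcone n
      = {s | CondI n s ∧ CondII n s ∧ CondIII n s ∧ CondIV n s ∧ CondV n s} := by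
  ext s
  constructor
  · rintro ⟨x, ⟨hxa, hxb⟩, rfl⟩
    refine ⟨?_, ?_, ?_, ?_, ?_⟩
    · -- CondI
      intro k hk1 hk2
      have hv : (Finset.Icc 1 k).Nonempty ∧ Finset.Icc 1 k ⊆ Finset.Icc 1 n ∧
          Finset.Icc 1 k ≠ Finset.Icc 1 n := by
        refine ⟨⟨1, by simp [hk1]⟩, Finset.Icc_subset_Icc le_rfl (by omega), ?_⟩
        intro h
        have : n ∈ Finset.Icc 1 k := h ▸ (by simp; omega)
        simp only [Finset.mem_Icc] at this
        omega
      rw [sAt, dif_pos hv]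
      exact sCoord_icc n k x
    · -- CondII
      intro i j k l hi hik hkl hlj hjn
      rw [sAt_hmap_erase n x i k j hi hik (by omega) hjn,
        sAt_hmap_erase n x i l j hi (by omega) hlj hjn]
    · -- CondIII
      intro I
      obtain ⟨hne, hsub, hneq⟩ := I.2
      show sCoord n x I.val = _
      unfold sCoord
      congr 1
      apply List.map_congr_left
      rintro ⟨p, q⟩ hpq
      obtain ⟨hp1, hpq', hqn⟩ := zip_pair_bounds n I.val hsub hpq
      exact (sAt_hmap_pair n x p q hp1 hpq' hqn).symm
    · -- CondIV
      intro i hi hin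
      rw [sAt_hmap_pair n x i (i+2) hi (by omega) hin,
        sAt_hmap_pair n x i (i+1) hi (by omega) (by omega)]
      have : insert (i+2) (Finset.Icc 1 i) = insert (i+2) (Finset.Icc 1 ((i+1)-1)) := by
        norm_num
      rw [this, sAt_hmap_pair n x (i+1) (i+2) (by omega) (by omega) hin]
      exact hxa i hi hin
    · -- CondV
      intro i j hi hij hjn
      have e1 : insert j (Finset.Icc 1 i) = insert j (Finset.Icc 1 ((i+1)-1)) := by norm_num
      have e2 : insert (j+1) (Finset.Icc 1 i) = insert (j+1) (Finset.Icc 1 ((i+1)-1)) := by norm_num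
      rw [sAt_hmap_pair n x i (j+1) hi (by omega) hjn, e1,
        sAt_hmap_pair n x (i+1) j (by omega) (by omega) (by omega),
        sAt_hmap_pair n x i j hi (by omega) (by omega), e2,
        sAt_hmap_pair n x (i+1) (j+1) (by omega) (by omega) hjn]
      exact hxb i j hi hij hjn
  · rintro ⟨h1, h2, h3, h4, h5⟩
    refine ⟨xOf n s, ⟨?_, ?_⟩, ?_⟩
    · intro i hi hin
      rw [ent_xOf n s i (i+2) hi (by omega) hin,
        ent_xOf n s i (i+1) hi (by omega) (by omega),
        ent_xOf n s (i+1) (i+2) (by omega) (by omega) hin]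
      have := h4 i hi hin
      norm_num at this ⊢
      convert this using 3
    · intro i j hi hij hjn
      rw [ent_xOf n s i (j+1) hi (by omega) hjn,
        ent_xOf n s (i+1) j (by omega) (by omega) (by omega),
        ent_xOf n s i j hi (by omega) (by omega),
        ent_xOf n s (i+1) (j+1) (by omega) (by omega) hjn]
      have := h5 i j hi hij hjn
      norm_num at this ⊢
      convert this using 4
    · funext I
      obtain ⟨hne, hsub, hneq⟩ := I.2
      show sCoord n (xOf n s) I.val = s I
      rw [h3 I]
      unfold sCoord
      congr 1
      apply List.map_congr_left
      rintro ⟨p, q⟩ hpq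
      obtain ⟨hp1, hpq', hqn⟩ := zip_pair_bounds n I.val hsub hpq
      exact ent_xOf n s p q hp1 hpq' hqn
end

section
/- Let A be a weight system. Define n_−^A to be the vector space with basis f^A_{i,j}, 1 ≤ i < j ≤ n, with bracket [f^A_{i,j}, f^A_{k,l}] = f^A_{i,l} if j = k, i ≤ k and a_{i,j}+a_{k,l} = a_{i,l}; = −f^A_{k,j} if l = i, k ≤ i and a_{k,l}+a_{i,j} = a_{k,j}; and 0 otherwise. Then this bracket satisfies the Jacobi identity and antisymmetry, so n_−^A is a Lie algebra; moreover n_−^A is nilpotent. -/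
/-!
View `f_{i,j}` as an arrow `i → j`, and let `f_p f_q = f_{i,l}` when `p = (i,j)` and `q = (j,l)`
are arrows with `a_{i,j} + a_{j,l} = a_{i,l}`, and `f_p f_q = 0` otherwise. The degenerate bracket
is the commutator of this product. Conditions (a) and (b) telescope to the triangle inequality (A),
and under (A) both ways of bracketing a chain `i < j < k < l` survive exactly when
`a_{i,j} + a_{j,k} + a_{k,l} = a_{i,l}`. So the product is associative, and its commutator satisfies
the Jacobi identity. A bracket adds the lengths `j - i` of the arrows, so nested brackets of
`n + 1` elements vanish.
-/

/-- Structure constants of the degenerate bracket: `[f^A_{i,j}, f^A_{k,l}] = f^A_{i,l}`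
if `j = k` and `a_{i,j} + a_{k,l} = a_{i,l}`; `= -f^A_{k,j}` if `l = i` and
`a_{k,l} + a_{i,j} = a_{k,j}`; and `0` otherwise. -/
noncomputable def strC (n : ℕ) (a : ℕ → ℕ → ℤ) (p q : ℕ × ℕ) : (ℕ × ℕ) →₀ ℝ :=
  (if p.2 = q.1 ∧ a p.1 p.2 + a q.1 q.2 = a p.1 q.2 ∧
      (1 ≤ p.1 ∧ p.1 < p.2 ∧ p.2 ≤ n) ∧ (1 ≤ q.1 ∧ q.1 < q.2 ∧ q.2 ≤ n)
    then Finsupp.single (p.1, q.2) (1 : ℝ) else 0)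
  - (if q.2 = p.1 ∧ a q.1 q.2 + a p.1 p.2 = a q.1 p.2 ∧
      (1 ≤ p.1 ∧ p.1 < p.2 ∧ p.2 ≤ n) ∧ (1 ≤ q.1 ∧ q.1 < q.2 ∧ q.2 ≤ n)
    then Finsupp.single (q.1, p.2) (1 : ℝ) else 0)

/-- The bilinear extension of the degenerate bracket to the span of the `f^A_{i,j}`. -/
noncomputable def brkt (n : ℕ) (a : ℕ → ℕ → ℤ) (x y : (ℕ × ℕ) →₀ ℝ) : (ℕ × ℕ) →₀ ℝ :=
  x.sum fun p cp => y.sum fun q cq => (cp * cq) • strC n a p q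

/-- `nest m v = [v_m, [v_{m-1}, […, [v_1, v_0]]]]`: a left-nested bracket of length `m+1`. -/
noncomputable def nest (n : ℕ) (a : ℕ → ℕ → ℤ) : ℕ → (ℕ → ((ℕ × ℕ) →₀ ℝ)) → ((ℕ × ℕ) →₀ ℝ)
  | 0, v => v 0
  | m + 1, v => brkt n a (v (m + 1)) (nest n a m v)

open Finsupp

section WeightSystem

variable {n : ℕ} {a : ℕ → ℕ → ℤ}

theorem weight_monge_telescope
    (hb : ∀ i j, 1 ≤ i → i + 1 < j → j + 1 ≤ n →
      a i j + a (i+1) (j+1) ≥ a i (j+1) + a (i+1) j)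
    {i j k : ℕ} (hi : 1 ≤ i) (hij : i + 1 < j) (hjk : j ≤ k) (hk : k ≤ n) :
    a i k + a (i + 1) j ≤ a i j + a (i + 1) k := by
  induction k, hjk using Nat.le_induction with
  | base => omega
  | succ k hjk ih =>
    linarith [hb i k hi (by omega) hk, ih (by omega)]

theorem weight_triangle_succ
    (ha : ∀ i, 1 ≤ i → i + 2 ≤ n → a i (i+1) + a (i+1) (i+2) ≥ a i (i+2))
    (hb : ∀ i j, 1 ≤ i → i + 1 < j → j + 1 ≤ n →
      a i j + a (i+1) (j+1) ≥ a i (j+1) + a (i+1) j)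
    {i j : ℕ} (hi : 1 ≤ i) (hij : i + 2 ≤ j) (hj : j ≤ n) :
    a i j ≤ a i (i + 1) + a (i + 1) j := by
  induction j, hij using Nat.le_induction with
  | base => linarith [ha i hi hj]
  | succ j hij ih =>
    linarith [hb i j hi (by omega) hj, ih (by omega)]

theorem weight_triangle
    (ha : ∀ i, 1 ≤ i → i + 2 ≤ n → a i (i+1) + a (i+1) (i+2) ≥ a i (i+2))
    (hb : ∀ i j, 1 ≤ i → i + 1 < j → j + 1 ≤ n →
      a i j + a (i+1) (j+1) ≥ a i (j+1) + a (i+1) j)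
    {i j k : ℕ} (hi : 1 ≤ i) (hij : i < j) (hjk : j < k) (hk : k ≤ n) :
    a i k ≤ a i j + a j k := by
  obtain ⟨d, hd⟩ : ∃ d, j = i + 1 + d := ⟨j - i - 1, by omega⟩
  induction d generalizing i with
  | zero =>
    subst hd
    exact weight_triangle_succ ha hb hi (by omega) hk
  | succ d ih =>
    linarith [ih (i := i + 1) (by omega) (by omega) (by omega),
      weight_monge_telescope hb hi (by omega) hjk.le hk]

end WeightSystem

def IsArrow (n : ℕ) (p : ℕ × ℕ) : Prop := 1 ≤ p.1 ∧ p.1 < p.2 ∧ p.2 ≤ n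

def Composable (n : ℕ) (a : ℕ → ℕ → ℤ) (p q : ℕ × ℕ) : Prop :=
  p.2 = q.1 ∧ a p.1 p.2 + a q.1 q.2 = a p.1 q.2 ∧ IsArrow n p ∧ IsArrow n q

instance (n : ℕ) (a : ℕ → ℕ → ℤ) (p q : ℕ × ℕ) : Decidable (Composable n a p q) :=
  inferInstanceAs (Decidable (_ ∧ _ ∧ (_ ∧ _ ∧ _) ∧ (_ ∧ _ ∧ _)))

noncomputable def arrowMul (n : ℕ) (a : ℕ → ℕ → ℤ) (p q : ℕ × ℕ) : (ℕ × ℕ) →₀ ℝ :=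
  if Composable n a p q then single (p.1, q.2) 1 else 0

noncomputable def arrowMulₗ (n : ℕ) (a : ℕ → ℕ → ℤ) :
    ((ℕ × ℕ) →₀ ℝ) →ₗ[ℝ] ((ℕ × ℕ) →₀ ℝ) →ₗ[ℝ] ((ℕ × ℕ) →₀ ℝ) :=
  linearCombination ℝ fun p => linearCombination ℝ (arrowMul n a p)

theorem Finsupp.linearCombination_linearCombination_apply {α R M : Type*} [CommSemiring R]
    [AddCommMonoid M] [Module R M] (c : α → α → M) (x y : α →₀ R) :
    linearCombination R (fun p => linearCombination R (c p)) x y =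
      x.sum fun p cp => y.sum fun q cq => (cp * cq) • c p q := by
  simp [linearCombination_apply, smul_sum, LinearMap.finsupp_sum_apply, mul_smul]

theorem jacobi_of_commutator_of_assoc {R M : Type*} [CommSemiring R] [AddCommGroup M]
    [Module R M] (μ : M →ₗ[R] M →ₗ[R] M) (hμ : ∀ x y z, μ (μ x y) z = μ x (μ y z))
    (b : M → M → M) (hb : ∀ x y, b x y = μ x y - μ y x) (x y z : M) :
    b x (b y z) + b y (b z x) + b z (b x y) = 0 := by
  simp only [hb, map_sub, LinearMap.sub_apply, hμ]
  abel

section DegenerateBracket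

variable (n : ℕ) (a : ℕ → ℕ → ℤ)

theorem strC_eq_arrowMul_sub (p q : ℕ × ℕ) :
    strC n a p q = arrowMul n a p q - arrowMul n a q p := by
  simp only [strC, arrowMul, Composable, IsArrow]
  congr 1
  exact if_congr (by tauto) rfl rfl

theorem brkt_eq_arrowMulₗ_sub (x y : (ℕ × ℕ) →₀ ℝ) :
    brkt n a x y = arrowMulₗ n a x y - arrowMulₗ n a y x := by
  simp only [brkt, arrowMulₗ, linearCombination_linearCombination_apply, strC_eq_arrowMul_sub,
    smul_sub, sum_sub]
  rw [sum_comm y x]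
  simp only [mul_comm]

theorem brkt_antisymm (x y : (ℕ × ℕ) →₀ ℝ) : brkt n a x y = -brkt n a y x := by
  rw [brkt_eq_arrowMulₗ_sub, brkt_eq_arrowMulₗ_sub, neg_sub]

theorem arrowMulₗ_single_single (p q : ℕ × ℕ) :
    arrowMulₗ n a (single p 1) (single q 1) = arrowMul n a p q := by
  simp [arrowMulₗ]

theorem arrowMulₗ_arrowMul_single (p q r : ℕ × ℕ) :
    arrowMulₗ n a (arrowMul n a p q) (single r 1) =
      if Composable n a p q ∧ Composable n a (p.1, q.2) r then single (p.1, r.2) 1 else 0 := by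
  unfold arrowMul
  split_ifs <;> simp_all [arrowMulₗ, arrowMul]

theorem arrowMulₗ_single_arrowMul (p q r : ℕ × ℕ) :
    arrowMulₗ n a (single p 1) (arrowMul n a q r) =
      if Composable n a q r ∧ Composable n a p (q.1, r.2) then single (p.1, r.2) 1 else 0 := by
  unfold arrowMul
  split_ifs <;> simp_all [arrowMulₗ, arrowMul]

variable {n a}

theorem composable_assoc
    (htri : ∀ i j k, 1 ≤ i → i < j → j < k → k ≤ n → a i k ≤ a i j + a j k) (p q r : ℕ × ℕ) :
    Composable n a p q ∧ Composable n a (p.1, q.2) r ↔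
      Composable n a q r ∧ Composable n a p (q.1, r.2) := by
  obtain ⟨i, j⟩ := p
  obtain ⟨j', k⟩ := q
  obtain ⟨k', l⟩ := r
  simp only [Composable, IsArrow]
  constructor
  · rintro ⟨⟨rfl, hijk, hij, hjk⟩, rfl, hikl, -, hkl⟩
    have := htri j k l (by omega) hjk.2.1 hkl.2.1 hkl.2.2
    have := htri i j l hij.1 hij.2.1 (by omega) hkl.2.2
    exact ⟨⟨rfl, by omega, hjk, hkl⟩, rfl, by omega, hij, by omega⟩
  · rintro ⟨⟨rfl, hjkl, hjk, hkl⟩, rfl, hijl, hij, -⟩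
    have := htri i j k hij.1 hij.2.1 hjk.2.1 hjk.2.2
    have := htri i k l hij.1 (by omega) hkl.2.1 hkl.2.2
    exact ⟨⟨rfl, by omega, hij, hjk⟩, rfl, by omega, by omega, hkl⟩

theorem arrowMulₗ_assoc
    (htri : ∀ i j k, 1 ≤ i → i < j → j < k → k ≤ n → a i k ≤ a i j + a j k)
    (x y z : (ℕ × ℕ) →₀ ℝ) :
    arrowMulₗ n a (arrowMulₗ n a x y) z = arrowMulₗ n a x (arrowMulₗ n a y z) := by
  set μ := arrowMulₗ n a
  suffices μ.compr₂ μ = (LinearMap.llcomp ℝ _ _ _ ∘ₗ μ).compl₂ μ from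
    LinearMap.congr_fun (LinearMap.congr_fun (LinearMap.congr_fun this x) y) z
  ext p q r : 6
  simpa [μ, arrowMulₗ_single_single, arrowMulₗ_arrowMul_single, arrowMulₗ_single_arrowMul]
    using if_congr (composable_assoc htri p q r) rfl rfl

theorem brkt_jacobi
    (htri : ∀ i j k, 1 ≤ i → i < j → j < k → k ≤ n → a i k ≤ a i j + a j k)
    (x y z : (ℕ × ℕ) →₀ ℝ) :
    brkt n a x (brkt n a y z) + brkt n a y (brkt n a z x) + brkt n a z (brkt n a x y) = 0 :=
  jacobi_of_commutator_of_assoc _ (arrowMulₗ_assoc htri) _ (brkt_eq_arrowMulₗ_sub n a) x y z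


theorem arrowMul_mem_supported {d : ℕ} {q : ℕ × ℕ} (hq : IsArrow n q → d ≤ q.2 - q.1)
    (p : ℕ × ℕ) :
    arrowMul n a p q ∈ supported ℝ ℝ {s | IsArrow n s ∧ d + 1 ≤ s.2 - s.1} ∧
      arrowMul n a q p ∈ supported ℝ ℝ {s | IsArrow n s ∧ d + 1 ≤ s.2 - s.1} := by
  unfold arrowMul
  constructor <;> split_ifs with h
  all_goals first
    | exact zero_mem _
    | obtain ⟨hcomp, -, h₁, h₂⟩ := h
      have hlen := hq (by assumption)
      unfold IsArrow at h₁ h₂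
      refine single_mem_supported ℝ _ ⟨⟨?_, ?_, ?_⟩, ?_⟩ <;> dsimp only <;> omega

-- Only the arrow components of `y` are constrained, so for `d = 0` every `y` qualifies.
theorem brkt_mem_supported {d : ℕ} {y : (ℕ × ℕ) →₀ ℝ}
    (hy : y ∈ supported ℝ ℝ {s | IsArrow n s → d ≤ s.2 - s.1}) (x : (ℕ × ℕ) →₀ ℝ) :
    brkt n a x y ∈ supported ℝ ℝ {s | IsArrow n s ∧ d + 1 ≤ s.2 - s.1} := by
  rw [mem_supported] at hy
  rw [brkt_eq_arrowMulₗ_sub, arrowMulₗ, linearCombination_linearCombination_apply,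
    linearCombination_linearCombination_apply]
  refine sub_mem ?_ ?_
  · refine Submodule.finsuppSum_mem _ _ _ _ fun p _ =>
      Submodule.finsuppSum_mem _ _ _ _ fun q hq => ?_
    exact Submodule.smul_mem _ _ (arrowMul_mem_supported (hy (mem_support_iff.mpr hq)) p).1
  · refine Submodule.finsuppSum_mem _ _ _ _ fun q hq =>
      Submodule.finsuppSum_mem _ _ _ _ fun p _ => ?_
    exact Submodule.smul_mem _ _ (arrowMul_mem_supported (hy (mem_support_iff.mpr hq)) p).2

theorem nest_mem_supported (m : ℕ) (v : ℕ → (ℕ × ℕ) →₀ ℝ) :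
    nest n a m v ∈ supported ℝ ℝ {s | IsArrow n s → m ≤ s.2 - s.1} := by
  induction m with
  | zero => simp
  | succ m ih => exact supported_mono (fun s hs _ => hs.2) (brkt_mem_supported ih _)

theorem nest_succ_eq_zero {m : ℕ} (hm : n ≤ m) (v : ℕ → (ℕ × ℕ) →₀ ℝ) :
    nest n a (m + 1) v = 0 := by
  have hlong : nest n a (m + 1) v ∈ _ := brkt_mem_supported (nest_mem_supported m v) _
  have hempty : {s : ℕ × ℕ | IsArrow n s ∧ m + 1 ≤ s.2 - s.1} = ∅ := by
    ext s
    simp only [IsArrow, Set.mem_ofPred_eq, Set.mem_empty_iff_false, iff_false]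
    omega
  rwa [hempty, supported_empty, Submodule.mem_bot] at hlong

end DegenerateBracket

theorem stmt16_general (n : ℕ) (a : ℕ → ℕ → ℤ)
    (ha : ∀ i, 1 ≤ i → i + 2 ≤ n → a i (i+1) + a (i+1) (i+2) ≥ a i (i+2))
    (hb : ∀ i j, 1 ≤ i → i + 1 < j → j + 1 ≤ n →
      a i j + a (i+1) (j+1) ≥ a i (j+1) + a (i+1) j) :
    (∀ x y, brkt n a x y = - brkt n a y x) ∧
    (∀ x y z, brkt n a x (brkt n a y z) + brkt n a y (brkt n a z x)
        + brkt n a z (brkt n a x y) = 0) ∧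
    (∃ N : ℕ, ∀ m, N ≤ m → ∀ v : ℕ → ((ℕ × ℕ) →₀ ℝ), nest n a m v = 0) := by
  have htri : ∀ i j k, 1 ≤ i → i < j → j < k → k ≤ n → a i k ≤ a i j + a j k :=
    fun i j k hi hij hjk hk => weight_triangle ha hb hi hij hjk hk
  refine ⟨brkt_antisymm n a, brkt_jacobi htri, n + 1, fun m hm v => ?_⟩
  obtain ⟨m, rfl⟩ : ∃ k, m = k + 1 := ⟨m - 1, by omega⟩
  exact nest_succ_eq_zero (by omega) v

/-- For any weight system, the degenerate bracket is antisymmetric and satisfies the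
Jacobi identity, so `n_-^A` is a Lie algebra; moreover `n_-^A` is nilpotent. -/
theorem stmt16 (n : ℕ) (hn : 2 ≤ n) (a : ℕ → ℕ → ℤ)
    (ha : ∀ i, 1 ≤ i → i + 2 ≤ n → a i (i+1) + a (i+1) (i+2) ≥ a i (i+2))
    (hb : ∀ i j, 1 ≤ i → i + 1 < j → j + 1 ≤ n →
      a i j + a (i+1) (j+1) ≥ a i (j+1) + a (i+1) j) :
    (∀ x y, brkt n a x y = - brkt n a y x) ∧
    (∀ x y z, brkt n a x (brkt n a y z) + brkt n a y (brkt n a z x)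
        + brkt n a z (brkt n a x y) = 0) ∧
    (∃ N : ℕ, ∀ m, N ≤ m → ∀ v : ℕ → ((ℕ × ℕ) →₀ ℝ), nest n a m v = 0) :=
  stmt16_general n a ha hb
end

section
/- Let A be a weight system such that all inequalities of types (a) and (b) are strict. Then all inequalities of types (A) and (B) are strict: a_{i,j} + a_{j,k} > a_{i,k} for all i < j < k, and a_{i,j} + a_{k,l} > a_{i,l} + a_{k,j} for all i < k < j < l. Consequently, the Lie algebra n_−^A is abelian ([f^A_{i,j}, f^A_{k,l}] = 0 for all pairs). -/
/-- If all inequalities (a) and (b) are strict then all inequalities (A) and (B) are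
strict, and consequently the Lie algebra `n_-^A` is abelian. -/
theorem stmt17 (n : ℕ) (hn : 2 ≤ n) (a : ℕ → ℕ → ℤ)
    (ha : ∀ i, 1 ≤ i → i + 2 ≤ n → a i (i+1) + a (i+1) (i+2) > a i (i+2))
    (hb : ∀ i j, 1 ≤ i → i + 1 < j → j + 1 ≤ n →
      a i j + a (i+1) (j+1) > a i (j+1) + a (i+1) j) :
    (∀ i j k, 1 ≤ i → i < j → j < k → k ≤ n → a i k < a i j + a j k) ∧
    (∀ i k j l, 1 ≤ i → i < k → k < j → j < l → l ≤ n →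
      a i l + a k j < a i j + a k l) ∧
    (∀ x y, brkt n a x y = 0) := by
  -- Step 1: a i (j+1) < a i j + a j (j+1) for 1 ≤ i < j, j+1 ≤ n.
  have hA1 : ∀ i j, 1 ≤ i → i < j → j + 1 ≤ n → a i (j+1) < a i j + a j (j+1) := by
    have key : ∀ d i j, j = i + d + 1 → 1 ≤ i → j + 1 ≤ n →
        a i (j+1) < a i j + a j (j+1) := by
      intro d
      induction d with
      | zero =>
        intro i j hj h1 hn'
        subst hj
        have := ha i h1 (by omega)
        have e1 : i + 1 + 1 = i + 2 := by omega
        rw [e1]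
        linarith
      | succ d ih =>
        intro i j hj h1 hn'
        have h2 : j = (i+1) + d + 1 := by omega
        have h3 := ih (i+1) j h2 (by omega) hn'
        have h4 := hb i j h1 (by omega) hn'
        linarith
    intro i j h1 h2 h3
    exact key (j - i - 1) i j (by omega) h1 h3
  -- Step 2: "column" inequality: a i l + a (i+1) j < a i j + a (i+1) l
  have hD : ∀ i j l, 1 ≤ i → i + 1 < j → j < l → l ≤ n →
      a i l + a (i+1) j < a i j + a (i+1) l := by
    have key : ∀ e i j l, l = j + 1 + e → 1 ≤ i → i + 1 < j → l ≤ n →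
        a i l + a (i+1) j < a i j + a (i+1) l := by
      intro e
      induction e with
      | zero =>
        intro i j l hl h1 h2 h3
        subst hl
        have := hb i j h1 h2 h3
        linarith
      | succ e ih =>
        intro i j l hl h1 h2 h3
        have h4 := ih i j (j + 1 + e) rfl h1 h2 (by omega)
        have h5 := hb i (j + 1 + e) h1 (by omega) (by omega)
        have e1 : j + 1 + e + 1 = l := by omega
        rw [e1] at h5
        linarith
    intro i j l h1 h2 h3 h4
    exact key (l - j - 1) i j l (by omega) h1 h2 h4
  -- Step 3: type (B) inequalities.
  have hB : ∀ i k j l, 1 ≤ i → i < k → k < j → j < l → l ≤ n →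
      a i l + a k j < a i j + a k l := by
    have key : ∀ c i k j l, k = i + 1 + c → 1 ≤ i → k < j → j < l → l ≤ n →
        a i l + a k j < a i j + a k l := by
      intro c
      induction c with
      | zero =>
        intro i k j l hk h1 h2 h3 h4
        subst hk
        exact hD i j l h1 (by omega) h3 h4
      | succ c ih =>
        intro i k j l hk h1 h2 h3 h4
        have h5 := ih i (i + 1 + c) j l rfl h1 (by omega) h3 h4
        have h6 := hD (i + 1 + c) j l (by omega) (by omega) h3 h4
        have e1 : i + 1 + c + 1 = k := by omega
        rw [e1] at h6
        linarith
    intro i k j l h1 h2 h3 h4 h5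
    exact key (k - i - 1) i k j l (by omega) h1 h3 h4 h5
  -- Step 4: type (A) inequalities.
  have hA : ∀ i j k, 1 ≤ i → i < j → j < k → k ≤ n → a i k < a i j + a j k := by
    intro i j k h1 h2 h3 h4
    rcases eq_or_lt_of_le (show j + 1 ≤ k by omega) with h | h
    · subst h
      exact hA1 i j h1 h2 h4
    · have h5 := hA1 i j h1 h2 (by omega)
      have h6 := hB i j (j+1) k h1 h2 (by omega) h (by omega)
      linarith
  refine ⟨hA, hB, ?_⟩
  -- Step 5: abelian.
  have hz : ∀ p q, strC n a p q = 0 := by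
    intro p q
    unfold strC
    rw [if_neg, if_neg, sub_zero]
    · rintro ⟨h1, h2, ⟨hp1, hp2, hp3⟩, ⟨hq1, hq2, hq3⟩⟩
      have := hA q.1 q.2 p.2 hq1 hq2 (h1 ▸ hp2) hp3
      rw [← h1] at h2
      omega
    · rintro ⟨h1, h2, ⟨hp1, hp2, hp3⟩, ⟨hq1, hq2, hq3⟩⟩
      have := hA p.1 p.2 q.2 hp1 hp2 (h1 ▸ hq2) hq3
      rw [← h1] at h2
      omega
  intro x y
  simp [brkt, hz]
end

section
/- Define a partial order ⪯ on nonempty proper subsets of {1,…,n} by x ⪯ y iff |x| ≥ |y| and the unique two-column PBW tableau whose first column has content x and second column has content y is PBW semistandard. Then ⪯ is reflexive, antisymmetric, and transitive, i.e., it is a partial order. -/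
/-- A PBW column of height `h`: entries in `[1,n]`, pairwise distinct, entries `≤ h`
sit in their own row, and entries `> h` decrease down the column. -/
def IsPBWColumn (n h : ℕ) (Z : ℕ → ℕ) : Prop :=
  (∀ i, 1 ≤ i → i ≤ h → 1 ≤ Z i ∧ Z i ≤ n) ∧
  (∀ i i', 1 ≤ i → i ≤ h → 1 ≤ i' → i' ≤ h → i ≠ i' → Z i ≠ Z i') ∧
  (∀ i, 1 ≤ i → i ≤ h → Z i ≤ h → Z i = i) ∧
  (∀ i i', 1 ≤ i → i ≤ h → 1 ≤ i' → i' ≤ h → Z i' < Z i → h < Z i' → i < i')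

/-- `x ⪯ y` iff `|x| ≥ |y|` and the (unique) two-column PBW tableau whose first column
has content `x` and second column content `y` is PBW semistandard. -/
def PBWle (n : ℕ) (x y : Finset ℕ) : Prop :=
  y.card ≤ x.card ∧ ∃ Z₁ Z₂ : ℕ → ℕ,
    IsPBWColumn n x.card Z₁ ∧ IsPBWColumn n y.card Z₂ ∧
    Finset.image Z₁ (Finset.Icc 1 x.card) = x ∧
    Finset.image Z₂ (Finset.Icc 1 y.card) = y ∧
    (∀ i, 1 ≤ i → i ≤ y.card → ∃ k, i ≤ k ∧ k ≤ x.card ∧ Z₂ i ≤ Z₁ k)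

namespace PBWaux

/-- tail maximum of a column -/
def Mf (p : ℕ) (Z : ℕ → ℕ) (i : ℕ) : ℕ := (Finset.Icc i p).sup Z

lemma Mf_anti {p : ℕ} {Z : ℕ → ℕ} {i j : ℕ} (h : i ≤ j) : Mf p Z j ≤ Mf p Z i :=
  Finset.sup_mono (Finset.Icc_subset_Icc_left h)

lemma le_Mf {p : ℕ} {Z : ℕ → ℕ} {i k : ℕ} (h1 : i ≤ k) (h2 : k ≤ p) : Z k ≤ Mf p Z i :=
  Finset.le_sup (Finset.mem_Icc.2 ⟨h1, h2⟩)

lemma pbw_anti {n p : ℕ} {Z : ℕ → ℕ} (hZ : IsPBWColumn n p Z) {i j : ℕ}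
    (h1 : 1 ≤ i) (h2 : i < j) (h3 : j ≤ p) (hb : p < Z i) : Z j < Z i := by
  obtain ⟨-, hinj, -, h4⟩ := hZ
  have hip : i ≤ p := le_trans (le_of_lt h2) h3
  have hj1 : 1 ≤ j := by omega
  have hne : Z i ≠ Z j := hinj i j h1 hip hj1 h3 (by omega)
  by_contra hcon
  push_neg at hcon
  have hlt : Z i < Z j := lt_of_le_of_ne hcon hne
  have := h4 j i hj1 h3 h1 hip hlt hb
  omega

lemma pbw_self {n p : ℕ} {Z : ℕ → ℕ} (hZ : IsPBWColumn n p Z) {x : Finset ℕ}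
    (him : Finset.image Z (Finset.Icc 1 p) = x) {i : ℕ} (h1 : 1 ≤ i) (h2 : i ≤ p)
    (hix : i ∈ x) : Z i = i := by
  rw [← him] at hix
  obtain ⟨j, hj, hji⟩ := Finset.mem_image.1 hix
  rw [Finset.mem_Icc] at hj
  have hj' := hZ.2.2.1 j hj.1 hj.2 (by omega)
  have hji2 : j = i := by omega
  subst hji2
  omega

lemma pbw_big {n p : ℕ} {Z : ℕ → ℕ} (hZ : IsPBWColumn n p Z) {x : Finset ℕ}
    (him : Finset.image Z (Finset.Icc 1 p) = x) {i : ℕ} (h1 : 1 ≤ i) (h2 : i ≤ p)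
    (hix : i ∉ x) : p < Z i := by
  by_contra h
  push_neg at h
  have hself := hZ.2.2.1 i h1 h2 h
  apply hix
  rw [← him]
  exact Finset.mem_image.2 ⟨i, Finset.mem_Icc.2 ⟨h1, h2⟩, hself⟩

lemma pbw_mem {p : ℕ} {Z : ℕ → ℕ} {x : Finset ℕ}
    (him : Finset.image Z (Finset.Icc 1 p) = x) {i : ℕ} (h1 : 1 ≤ i) (h2 : i ≤ p) :
    Z i ∈ x := by
  rw [← him]
  exact Finset.mem_image.2 ⟨i, Finset.mem_Icc.2 ⟨h1, h2⟩, rfl⟩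

lemma Mf_eq_of_big {n p : ℕ} {Z : ℕ → ℕ} (hZ : IsPBWColumn n p Z) {i : ℕ}
    (h1 : 1 ≤ i) (h2 : i ≤ p) (hb : p < Z i) : Mf p Z i = Z i := by
  apply le_antisymm
  · apply Finset.sup_le
    intro k hk
    rw [Finset.mem_Icc] at hk
    rcases eq_or_lt_of_le hk.1 with h | h
    · rw [← h]
    · exact le_of_lt (pbw_anti hZ h1 h hk.2 hb)
  · exact le_Mf le_rfl h2

lemma pbw_big_iff {n p : ℕ} {Z : ℕ → ℕ} (hZ : IsPBWColumn n p Z) {i : ℕ}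
    (h1 : 1 ≤ i) (h2 : i ≤ p) :
    p < Z i ↔ (p < Mf p Z i ∧ Mf p Z (i+1) < Mf p Z i) := by
  constructor
  · intro hb
    have hM := Mf_eq_of_big hZ h1 h2 hb
    refine ⟨by omega, ?_⟩
    rw [hM]
    refine (Finset.sup_lt_iff (show (⊥:ℕ) < Z i by rw [Nat.bot_eq_zero]; omega)).2 ?_
    intro k hk
    rw [Finset.mem_Icc] at hk
    exact pbw_anti hZ h1 (by omega) hk.2 hb
  · rintro ⟨hM1, hM2⟩
    by_contra hb
    push_neg at hb
    have hself : Z i = i := hZ.2.2.1 i h1 h2 hb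
    obtain ⟨k, hk, hkeq⟩ := Finset.exists_mem_eq_sup (Finset.Icc i p)
      (by rw [Finset.nonempty_Icc]; exact h2) Z
    rw [Finset.mem_Icc] at hk
    have hMk : Mf p Z i = Z k := hkeq
    have hki : k ≠ i := by
      intro h
      rw [h, hself] at hMk
      omega
    have hle : Mf p Z i ≤ Mf p Z (i+1) := by
      rw [hMk]
      exact le_Mf (by omega) hk.2
    omega

lemma pbw_eq_of_Mf_eq {n p : ℕ} {Z1 Z2 : ℕ → ℕ}
    (h1 : IsPBWColumn n p Z1) (h2 : IsPBWColumn n p Z2)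
    (hM : ∀ i, 1 ≤ i → i ≤ p → Mf p Z1 i = Mf p Z2 i) :
    ∀ i, 1 ≤ i → i ≤ p → Z1 i = Z2 i := by
  intro i hi1 hi2
  have hM' : Mf p Z1 (i+1) = Mf p Z2 (i+1) := by
    by_cases h : i + 1 ≤ p
    · exact hM _ (by omega) h
    · have he : Finset.Icc (i+1) p = ∅ := Finset.Icc_eq_empty (by omega)
      simp [Mf, he]
  by_cases hb : p < Z1 i
  · have hc1 := (pbw_big_iff h1 hi1 hi2).1 hb
    have hb2 : p < Z2 i := by
      refine (pbw_big_iff h2 hi1 hi2).2 ?_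
      rw [← hM _ hi1 hi2, ← hM']
      exact hc1
    rw [← Mf_eq_of_big h1 hi1 hi2 hb, ← Mf_eq_of_big h2 hi1 hi2 hb2, hM _ hi1 hi2]
  · have hb2 : ¬ p < Z2 i := by
      intro hb2
      apply hb
      refine (pbw_big_iff h1 hi1 hi2).2 ?_
      rw [hM _ hi1 hi2, hM']
      exact (pbw_big_iff h2 hi1 hi2).1 hb2
    rw [h1.2.2.1 i hi1 hi2 (by omega), h2.2.2.1 i hi1 hi2 (by omega)]

lemma pbw_rank {n p : ℕ} {Z : ℕ → ℕ} (hZ : IsPBWColumn n p Z) {x : Finset ℕ}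
    (him : Finset.image Z (Finset.Icc 1 p) = x) {i : ℕ}
    (h1 : 1 ≤ i) (h2 : i ≤ p) (hix : i ∉ x) :
    ((Finset.Icc 1 i) \ x).card
      = ((x.filter (fun w => p < w)).filter (fun w => Z i ≤ w)).card := by
  have hb : p < Z i := pbw_big hZ him h1 h2 hix
  have hinj : Set.InjOn Z ((Finset.Icc 1 i) \ x : Finset ℕ) := by
    intro a ha b hb' hab
    rw [Finset.coe_sdiff, Set.mem_diff, Finset.coe_Icc, Set.mem_Icc] at ha hb'
    by_contra hne
    exact hZ.2.1 a b ha.1.1 (le_trans ha.1.2 h2) hb'.1.1 (le_trans hb'.1.2 h2) hne hab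
  rw [← Finset.card_image_of_injOn hinj]
  congr 1
  ext w
  simp only [Finset.mem_image, Finset.mem_sdiff, Finset.mem_Icc, Finset.mem_filter]
  constructor
  · rintro ⟨a, ⟨⟨ha1, hai⟩, hax⟩, rfl⟩
    have hap : a ≤ p := le_trans hai h2
    have hba : p < Z a := pbw_big hZ him ha1 hap hax
    refine ⟨⟨pbw_mem him ha1 hap, hba⟩, ?_⟩
    rcases eq_or_lt_of_le hai with h | h
    · rw [h]
    · exact le_of_lt (pbw_anti hZ ha1 h h2 hba)
  · rintro ⟨⟨hwx, hwp⟩, hwZ⟩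
    rw [← him] at hwx
    obtain ⟨b, hb', rfl⟩ := Finset.mem_image.1 hwx
    rw [Finset.mem_Icc] at hb'
    have hbx : b ∉ x := by
      intro hbx
      have := pbw_self hZ him hb'.1 hb'.2 hbx
      omega
    have hbi : b ≤ i := by
      by_contra hcon
      push_neg at hcon
      have := pbw_anti hZ h1 hcon hb'.2 hb
      omega
    exact ⟨b, ⟨⟨hb'.1, hbi⟩, hbx⟩, rfl⟩

lemma pbw_unique {n p : ℕ} {Z1 Z2 : ℕ → ℕ}
    (h1 : IsPBWColumn n p Z1) (h2 : IsPBWColumn n p Z2) {x : Finset ℕ}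
    (him1 : Finset.image Z1 (Finset.Icc 1 p) = x)
    (him2 : Finset.image Z2 (Finset.Icc 1 p) = x) :
    ∀ i, 1 ≤ i → i ≤ p → Z1 i = Z2 i := by
  intro i hi1 hi2
  by_cases hix : i ∈ x
  · rw [pbw_self h1 him1 hi1 hi2 hix, pbw_self h2 him2 hi1 hi2 hix]
  · have hb1 := pbw_big h1 him1 hi1 hi2 hix
    have hb2 := pbw_big h2 him2 hi1 hi2 hix
    have hr1 := pbw_rank h1 him1 hi1 hi2 hix
    have hr2 := pbw_rank h2 him2 hi1 hi2 hix
    have ht1 : Z1 i ∈ x.filter (fun w => p < w) :=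
      Finset.mem_filter.2 ⟨pbw_mem him1 hi1 hi2, hb1⟩
    have ht2 : Z2 i ∈ x.filter (fun w => p < w) :=
      Finset.mem_filter.2 ⟨pbw_mem him2 hi1 hi2, hb2⟩
    by_contra hne
    rcases lt_or_gt_of_ne hne with h | h
    · have hsub : (x.filter (fun w => p < w)).filter (fun w => Z2 i ≤ w)
          ⊆ (x.filter (fun w => p < w)).filter (fun w => Z1 i ≤ w) := by
        intro w hw
        rw [Finset.mem_filter] at hw ⊢
        exact ⟨hw.1, by omega⟩
      have hlt : ((x.filter (fun w => p < w)).filter (fun w => Z2 i ≤ w)).card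
          < ((x.filter (fun w => p < w)).filter (fun w => Z1 i ≤ w)).card := by
        apply Finset.card_lt_card
        refine (Finset.ssubset_iff_of_subset hsub).2 ⟨Z1 i, ?_, ?_⟩
        · exact Finset.mem_filter.2 ⟨ht1, le_rfl⟩
        · intro hc
          rw [Finset.mem_filter] at hc
          omega
      omega
    · have hsub : (x.filter (fun w => p < w)).filter (fun w => Z1 i ≤ w)
          ⊆ (x.filter (fun w => p < w)).filter (fun w => Z2 i ≤ w) := by
        intro w hw
        rw [Finset.mem_filter] at hw ⊢
        exact ⟨hw.1, by omega⟩
      have hlt : ((x.filter (fun w => p < w)).filter (fun w => Z1 i ≤ w)).card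
          < ((x.filter (fun w => p < w)).filter (fun w => Z2 i ≤ w)).card := by
        apply Finset.card_lt_card
        refine (Finset.ssubset_iff_of_subset hsub).2 ⟨Z2 i, ?_, ?_⟩
        · exact Finset.mem_filter.2 ⟨ht2, le_rfl⟩
        · intro hc
          rw [Finset.mem_filter] at hc
          omega
      omega

lemma Mf_congr {p : ℕ} {Z1 Z2 : ℕ → ℕ} (h : ∀ k, 1 ≤ k → k ≤ p → Z1 k = Z2 k)
    {i : ℕ} (hi : 1 ≤ i) : Mf p Z1 i = Mf p Z2 i := by
  unfold Mf
  apply Finset.sup_congr rfl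
  intro k hk
  rw [Finset.mem_Icc] at hk
  exact h k (by omega) hk.2

lemma ss_Mf {p q : ℕ} {Z1 Z2 : ℕ → ℕ} (hqp : q ≤ p)
    (hss : ∀ i, 1 ≤ i → i ≤ q → ∃ k, i ≤ k ∧ k ≤ p ∧ Z2 i ≤ Z1 k) :
    ∀ i, 1 ≤ i → i ≤ q → Mf q Z2 i ≤ Mf p Z1 i := by
  intro i h1 h2
  apply Finset.sup_le
  intro k hk
  rw [Finset.mem_Icc] at hk
  obtain ⟨j, hj1, hj2, hj3⟩ := hss k (by omega) hk.2
  exact le_trans hj3 (le_trans (le_Mf hj1 hj2) (Mf_anti hk.1))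

lemma exists_pbw (n : ℕ) (x : Finset ℕ) (hx : x ⊆ Finset.Icc 1 n) :
    ∃ Z : ℕ → ℕ, IsPBWColumn n x.card Z ∧ Finset.image Z (Finset.Icc 1 x.card) = x := by
  classical
  obtain ⟨p, hp⟩ : ∃ p, x.card = p := ⟨_, rfl⟩
  suffices h : ∃ Z : ℕ → ℕ, IsPBWColumn n p Z ∧ Finset.image Z (Finset.Icc 1 p) = x by
    rw [hp]; exact h
  have hvcard : (x \ Finset.Icc 1 p).card = ((Finset.Icc 1 p) \ x).card := by
    have h1 := Finset.card_sdiff_add_card_inter x (Finset.Icc 1 p)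
    have h2 := Finset.card_sdiff_add_card_inter (Finset.Icc 1 p) x
    have h3 : (Finset.Icc 1 p).card = p := by simp
    have h4 : ((Finset.Icc 1 p) ∩ x).card = (x ∩ (Finset.Icc 1 p)).card := by
      rw [Finset.inter_comm]
    omega
  set s : Finset ℕ := (Finset.Icc 1 p) \ x with hs
  set v : Finset ℕ := x \ (Finset.Icc 1 p) with hv
  set e := s.orderIsoOfFin rfl with he
  set f := v.orderIsoOfFin hvcard with hf
  have hvp : ∀ w ∈ v, p < w ∧ w ∈ x := by
    intro w hw
    rw [hv, Finset.mem_sdiff, Finset.mem_Icc] at hw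
    have := hx hw.1
    rw [Finset.mem_Icc] at this
    exact ⟨by omega, hw.1⟩
  set Z : ℕ → ℕ := fun i => if h : i ∈ s then (f ((e.symm ⟨i, h⟩).rev) : ℕ) else i with hZdef
  have hZs : ∀ (i : ℕ) (h : i ∈ s), Z i = (f ((e.symm ⟨i, h⟩).rev) : ℕ) := by
    intro i h
    simp only [hZdef, dif_pos h]
  have hZns : ∀ (i : ℕ), i ∉ s → Z i = i := by
    intro i h
    simp only [hZdef, dif_neg h]
  have hZbig : ∀ (i : ℕ) (h : i ∈ s), Z i ∈ v := by
    intro i h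
    rw [hZs i h]
    exact (f _).2
  have hanti : ∀ (i : ℕ) (hi : i ∈ s) (j : ℕ) (hj : j ∈ s), i < j → Z j < Z i := by
    intro i hi j hj hij
    rw [hZs i hi, hZs j hj]
    have h1 : e.symm ⟨i, hi⟩ < e.symm ⟨j, hj⟩ := by
      rw [OrderIso.lt_iff_lt]
      exact Subtype.mk_lt_mk.2 hij
    have h2 : (e.symm ⟨j, hj⟩).rev < (e.symm ⟨i, hi⟩).rev := Fin.rev_lt_rev.2 h1
    exact Subtype.coe_lt_coe.2 (f.lt_iff_lt.2 h2)
  have hZmem : ∀ (i : ℕ), 1 ≤ i → i ≤ p → Z i ∈ x := by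
    intro i h1 h2
    by_cases h : i ∈ s
    · exact (hvp _ (hZbig i h)).2
    · rw [hZns i h]
      rw [hs, Finset.mem_sdiff] at h
      push_neg at h
      exact h (Finset.mem_Icc.2 ⟨h1, h2⟩)
  have hinj : ∀ i i', 1 ≤ i → i ≤ p → 1 ≤ i' → i' ≤ p → i ≠ i' → Z i ≠ Z i' := by
    intro i i' h1 h2 h3 h4 hne heq
    by_cases hi : i ∈ s <;> by_cases hi' : i' ∈ s
    · rw [hZs i hi, hZs i' hi'] at heq
      apply hne
      have e1 := f.injective (Subtype.coe_injective heq)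
      have e2 := Fin.rev_injective e1
      have e3 := e.symm.injective e2
      exact congrArg Subtype.val e3
    · have hbig := (hvp _ (hZbig i hi)).1
      rw [hZns i' hi'] at heq
      omega
    · have hbig := (hvp _ (hZbig i' hi')).1
      rw [hZns i hi] at heq
      omega
    · rw [hZns i hi, hZns i' hi'] at heq
      exact hne heq
  have himsub : Finset.image Z (Finset.Icc 1 p) ⊆ x := by
    intro w hw
    obtain ⟨a, ha, rfl⟩ := Finset.mem_image.1 hw
    rw [Finset.mem_Icc] at ha
    exact hZmem a ha.1 ha.2
  have hinjOn : Set.InjOn Z (Finset.Icc 1 p : Finset ℕ) := by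
    intro a ha b hb hab
    rw [Finset.coe_Icc, Set.mem_Icc] at ha hb
    by_contra hne
    exact hinj a b ha.1 ha.2 hb.1 hb.2 hne hab
  have hcardim : (Finset.image Z (Finset.Icc 1 p)).card = x.card := by
    rw [Finset.card_image_of_injOn hinjOn, Nat.card_Icc]
    omega
  have him : Finset.image Z (Finset.Icc 1 p) = x :=
    Finset.eq_of_subset_of_card_le himsub (le_of_eq hcardim.symm)
  refine ⟨Z, ⟨?_, hinj, ?_, ?_⟩, him⟩
  · intro i h1 h2
    have := hx (hZmem i h1 h2)
    rwa [Finset.mem_Icc] at this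
  · intro i h1 h2 h3
    by_cases h : i ∈ s
    · have := (hvp _ (hZbig i h)).1
      omega
    · exact hZns i h
  · intro i i' h1 h2 h3 h4 hlt hbig
    have hi' : i' ∈ s := by
      by_contra h
      rw [hZns i' h] at hlt hbig
      omega
    have hi : i ∈ s := by
      by_contra h
      rw [hZns i h] at hlt
      have := (hvp _ (hZbig i' hi')).1
      omega
    rcases lt_trichotomy i i' with h | h | h
    · exact h
    · subst h; omega
    · have := hanti i' hi' i hi h
      omega

end PBWaux

open PBWaux in
/-- The relation `⪯` on nonempty proper subsets of `{1,…,n}` is a partial order. -/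
theorem stmt19 (n : ℕ) (hn : 2 ≤ n) :
    (∀ x : Finset ℕ, x.Nonempty → x ⊆ Finset.Icc 1 n → x ≠ Finset.Icc 1 n →
      PBWle n x x) ∧
    (∀ x y : Finset ℕ, x.Nonempty → x ⊆ Finset.Icc 1 n → x ≠ Finset.Icc 1 n →
      y.Nonempty → y ⊆ Finset.Icc 1 n → y ≠ Finset.Icc 1 n →
      PBWle n x y → PBWle n y x → x = y) ∧
    (∀ x y z : Finset ℕ, x.Nonempty → x ⊆ Finset.Icc 1 n → x ≠ Finset.Icc 1 n →
      y.Nonempty → y ⊆ Finset.Icc 1 n → y ≠ Finset.Icc 1 n →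
      z.Nonempty → z ⊆ Finset.Icc 1 n → z ≠ Finset.Icc 1 n →
      PBWle n x y → PBWle n y z → PBWle n x z) := by
  refine ⟨?_, ?_, ?_⟩
  · intro x _ hsub _
    obtain ⟨Z, hZ, him⟩ := exists_pbw n x hsub
    exact ⟨le_rfl, Z, Z, hZ, hZ, him, him, fun i h1 h2 => ⟨i, le_rfl, h2, le_rfl⟩⟩
  · intro x y _ _ _ _ _ _ hxy hyx
    obtain ⟨hq, Z1, Z2, hc1, hc2, hi1, hi2, hss1⟩ := hxy
    obtain ⟨hp, W1, W2, hd1, hd2, hj1, hj2, hss2⟩ := hyx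
    have hpq : y.card = x.card := le_antisymm hq hp
    rw [hpq] at hc2 hi2 hss1 hd1 hj1 hss2
    have hu1 : ∀ i, 1 ≤ i → i ≤ x.card → W2 i = Z1 i := pbw_unique hd2 hc1 hj2 hi1
    have hu2 : ∀ i, 1 ≤ i → i ≤ x.card → W1 i = Z2 i := pbw_unique hd1 hc2 hj1 hi2
    have hA : ∀ i, 1 ≤ i → i ≤ x.card → Mf x.card Z2 i ≤ Mf x.card Z1 i :=
      ss_Mf le_rfl hss1
    have hB : ∀ i, 1 ≤ i → i ≤ x.card → Mf x.card W2 i ≤ Mf x.card W1 i :=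
      ss_Mf le_rfl hss2
    have hMeq : ∀ i, 1 ≤ i → i ≤ x.card → Mf x.card Z1 i = Mf x.card Z2 i := by
      intro i h1 h2
      have e1 : Mf x.card W2 i = Mf x.card Z1 i := Mf_congr hu1 h1
      have e2 : Mf x.card W1 i = Mf x.card Z2 i := Mf_congr hu2 h1
      have hb := hB i h1 h2
      rw [e1, e2] at hb
      exact le_antisymm hb (hA i h1 h2)
    have hZeq := pbw_eq_of_Mf_eq hc1 hc2 hMeq
    rw [← hi1, ← hi2]
    apply Finset.image_congr
    intro a ha
    rw [Finset.coe_Icc, Set.mem_Icc] at ha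
    exact hZeq a ha.1 ha.2
  · intro x y z _ _ _ _ _ _ _ _ _ hxy hyz
    obtain ⟨hq, Z1, Z2, hc1, hc2, hi1, hi2, hss1⟩ := hxy
    obtain ⟨hr, W1, W2, hd1, hd2, hj1, hj2, hss2⟩ := hyz
    have hu : ∀ i, 1 ≤ i → i ≤ y.card → Z2 i = W1 i := pbw_unique hc2 hd1 hi2 hj1
    refine ⟨le_trans hr hq, Z1, W2, hc1, hd2, hi1, hj2, ?_⟩
    intro i h1 h2
    have h2q : i ≤ y.card := le_trans h2 hr
    have hW : W2 i ≤ Mf y.card W1 i := by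
      obtain ⟨k, hk1, hk2, hk3⟩ := hss2 i h1 h2
      exact le_trans hk3 (le_Mf hk1 hk2)
    have hW2 : W2 i ≤ Mf y.card Z2 i := by
      rw [Mf_congr hu h1]
      exact hW
    have hX : W2 i ≤ Mf x.card Z1 i := le_trans hW2 (ss_Mf hq hss1 i h1 h2q)
    have hpos : (⊥ : ℕ) < W2 i := by
      have := hd2.1 i h1 h2
      rw [Nat.bot_eq_zero]
      omega
    have hX' : W2 i ≤ (Finset.Icc i x.card).sup Z1 := hX
    obtain ⟨k, hk, hk2⟩ := (Finset.le_sup_iff hpos).1 hX'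
    rw [Finset.mem_Icc] at hk
    exact ⟨k, hk.1, hk.2, hk2⟩
end
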